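/- arXiv:1811.11438 — 10 statements merged into one kernel-verified Lean document; each statement's English description precedes it below -/
import Mathlib

section
/- Let $n, k$ be positive integers with $n \geq 2k+1$. The Kneser graph $KG(n,k)$ contains a cycle of odd length $2\lceil k/(n-2k) \rceil + 1$. -/
/-- The Kneser graph `KG(n,k)`: vertices are the `k`-element subsets of
`{1, …, n}` (modelled as `Fin n`), two vertices being adjacent iff the
corresponding subsets are disjoint. -/
def kneserGraph (n k : ℕ) : SimpleGraph {A : Finset (Fin n) // A.card = k} where
  Adj X Y := X ≠ Y ∧ Disjoint X.1 Y.1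
  symm := ⟨fun _ _ h => ⟨h.1.symm, h.2.symm⟩⟩
  loopless := ⟨fun _ h => h.1 rfl⟩

/-!
Put the points of `Fin n` on a circle and use as vertices the arcs of `k` consecutive points;
the arcs starting at `a` and `b` are disjoint as soon as `b - a` lies between `k` and `n - k`
(mod `n`). Let `d = n - 2k` and `t = ⌈k/d⌉`, so that `k ≤ td < k + d`. The arcs starting at
`0, k, 2k, …, 2tk` form a closed walk: consecutive starts differ by `k`, and `0 - 2tk ≡ td`
(mod `n`) since `2tk + td = tn`. The `2t + 1` arcs are distinct because `n ∤ ck` for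
`0 < c ≤ 2t`: for `c = 2m` one has `ck ≡ -md` with `0 < md < n`, and for `c = 2m + 1` one has
`ck ≡ k - md` with `0 < k - md < n`.
-/

open Finset SimpleGraph

def cyclicInterval {n : ℕ} (a : Fin n) (k : ℕ) : Finset (Fin n) := {x | (x - a).val < k}

section CyclicInterval

variable {n k : ℕ}

lemma mem_cyclicInterval {a x : Fin n} : x ∈ cyclicInterval a k ↔ (x - a).val < k := by
  simp [cyclicInterval]

lemma card_cyclicInterval [NeZero n] (a : Fin n) (hk : k ≤ n) : #(cyclicInterval a k) = k := by
  have htranslate : cyclicInterval a k =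
      ({y : Fin n | y.val < k} : Finset (Fin n)).map (Equiv.addRight a).toEmbedding := by
    ext x
    simp [mem_cyclicInterval, sub_eq_add_neg]
  rw [htranslate, card_map, Fin.card_filter_val_lt, min_eq_right hk]

lemma disjoint_cyclicInterval [NeZero n] {a b : Fin n} (h₁ : k ≤ (b - a).val)
    (h₂ : (b - a).val + k ≤ n) : Disjoint (cyclicInterval a k) (cyclicInterval b k) := by
  refine disjoint_left.mpr fun x hxa hxb => ?_
  rw [mem_cyclicInterval] at hxa hxb
  have hsplit : (x - a).val = (x - b).val + (b - a).val := by
    rw [← sub_add_sub_cancel x b a, Fin.val_add, Nat.mod_eq_of_lt (by omega)]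
  omega

lemma cyclicInterval_injective [NeZero n] (hk : 0 < k) (h : 2 * k ≤ n) :
    Function.Injective (cyclicInterval · k : Fin n → Finset (Fin n)) := by
  intro a b (hab : cyclicInterval a k = cyclicInterval b k)
  have self_mem (c : Fin n) : c ∈ cyclicInterval c k := mem_cyclicInterval.mpr (by simpa)
  have hab' : (a - b).val < k := mem_cyclicInterval.mp (hab ▸ self_mem a)
  have hba : (b - a).val < k := mem_cyclicInterval.mp (hab ▸ self_mem b)
  by_contra hne
  rcases lt_or_gt_of_ne hne with hlt | hlt
  · rw [Fin.coe_sub_iff_lt.mpr hlt] at hab'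
    rw [Fin.sub_val_of_le hlt.le] at hba
    omega
  · rw [Fin.coe_sub_iff_lt.mpr hlt] at hba
    rw [Fin.sub_val_of_le hlt.le] at hab'
    omega

end CyclicInterval

lemma kneserGraph_adj_iff {n k : ℕ} (hk : 0 < k) {X Y : {A : Finset (Fin n) // A.card = k}} :
    (kneserGraph n k).Adj X Y ↔ Disjoint X.1 Y.1 := by
  refine ⟨And.right, fun h => ⟨?_, h⟩⟩
  rintro rfl
  rw [disjoint_self_iff_empty, ← card_eq_zero, X.2] at h
  omega

lemma SimpleGraph.cycleGraph_isContained_of_injOn {V : Type*} {G : SimpleGraph V} {m : ℕ}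
    (f : ℕ → V) (hf : Set.InjOn f (Set.Iio m))
    (hsucc : ∀ i, i + 1 < m → G.Adj (f i) (f (i + 1))) (hclose : G.Adj (f (m - 1)) (f 0)) : cycleGraph m ⊑ G := by
  have hstep (u v : Fin m) (huv : (v - u).val = 1) : G.Adj (f u) (f v) := by
    rcases le_or_gt u v with hle | hlt
    · rw [Fin.sub_val_of_le hle] at huv
      have hv : v.val = u.val + 1 := by omega
      exact hv ▸ hsucc u (hv ▸ v.2)
    · rw [Fin.coe_sub_iff_lt.mpr hlt] at huv
      have hu : u.val = m - 1 := by omega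
      have hv : v.val = 0 := by omega
      exact hu ▸ hv ▸ hclose
  refine ⟨⟨⟨fun i => f i, fun {u v} huv => ?_⟩, fun u v h => Fin.ext (hf u.2 v.2 h)⟩⟩
  rcases cycleGraph_adj'.mp huv with h | h
  · exact (hstep v u h).symm
  · exact hstep u v h

lemma not_dvd_mul_of_le_two_mul {n k d t c : ℕ} (hn : n = 2 * k + d) (hd : 0 < d)
    (ht : t * d < k + d) (hc : 0 < c) (hct : c ≤ 2 * t) : ¬ n ∣ c * k := by
  intro hdvd
  obtain ⟨m, rfl | rfl⟩ := Nat.even_or_odd' c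
  · have hmd : m * d ≤ t * d := Nat.mul_le_mul_right d (by omega)
    have hpos : 0 < m * d := Nat.mul_pos (by omega) hd
    have hsum : 2 * m * k + m * d = m * n := by rw [hn]; ring
    have hdvd' : n ∣ m * d := (Nat.dvd_add_right hdvd).mp (hsum ▸ dvd_mul_left n m)
    have := Nat.le_of_dvd hpos hdvd'
    omega
  · have hmd : m * d + d ≤ t * d := by
      rw [← Nat.succ_mul]; exact Nat.mul_le_mul_right d (by omega)
    have hsum : (2 * m + 1) * k = m * n + (k - m * d) := by
      rw [hn]; zify [show m * d ≤ k by omega]; ring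
    rw [hsum] at hdvd
    have := Nat.le_of_dvd (by omega) ((Nat.dvd_add_right (dvd_mul_left n m)).mp hdvd)
    omega

lemma ceil_div_toNat_mul_mem_Ico {k d : ℕ} (hd : 0 < d) :
    ⌈(k : ℚ) / d⌉.toNat * d ∈ Set.Ico k (k + d) := by
  have hdq : (0 : ℚ) < d := by exact_mod_cast hd
  rw [Int.ceil_toNat]
  constructor
  · exact_mod_cast (div_le_iff₀ hdq).mp (Nat.le_ceil ((k : ℚ) / d))
  · have := Nat.ceil_lt_add_one (div_nonneg (Nat.cast_nonneg k) hdq.le)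
    have : (⌈(k : ℚ) / d⌉₊ : ℚ) * d < k + d := by
      calc _ < ((k : ℚ) / d + 1) * d := by gcongr
        _ = k + d := by field_simp
    exact_mod_cast this

def kneserArc {n k : ℕ} [NeZero n] (hkn : k ≤ n) (a : Fin n) :
    {A : Finset (Fin n) // A.card = k} :=
  ⟨cyclicInterval a k, card_cyclicInterval a hkn⟩

open Fin.CommRing in
theorem cycleGraph_isContained_kneserGraph {n k d t : ℕ} (hk : 0 < k) (hd : 0 < d)
    (hn : n = 2 * k + d) (ht : t * d ∈ Set.Ico k (k + d)) :
    cycleGraph (2 * t + 1) ⊑ kneserGraph n k := by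
  obtain ⟨ht₁, ht₂⟩ := ht
  have : NeZero n := ⟨by omega⟩
  have hkn : k ≤ n := by omega
  have hadj {a b : Fin n} (hab : (b - a).val ∈ Set.Icc k (n - k)) :
      (kneserGraph n k).Adj (kneserArc hkn a) (kneserArc hkn b) :=
    (kneserGraph_adj_iff hk).mpr (disjoint_cyclicInterval hab.1 (by grind))
  refine cycleGraph_isContained_of_injOn (fun j => kneserArc hkn ((j * k : ℕ) : Fin n))
    ?_ (fun i _ => hadj ?_) (hadj ?_)
  · intro i hi j hj hij
    have hcast := cyclicInterval_injective hk (by omega) (congrArg Subtype.val hij)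
    simp only [CharP.natCast_eq_natCast (Fin n) n] at hcast
    wlog hle : i ≤ j generalizing i j
    · exact (this hj hi hij.symm hcast.symm (by omega)).symm
    by_contra hne
    have hdvd : n ∣ (j - i) * k := by
      rw [Nat.sub_mul]; exact (Nat.modEq_iff_dvd' (by gcongr)).mp hcast
    exact not_dvd_mul_of_le_two_mul hn hd ht₂ (by omega) (by rw [Set.mem_Iio] at hj; omega) hdvd
  · have : ((((i + 1) * k : ℕ) : Fin n) - ((i * k : ℕ) : Fin n)) = (k : Fin n) := by
      push_cast; ring
    rw [this, Fin.val_natCast, Nat.mod_eq_of_lt (by omega)]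
    constructor <;> omega
  · have hn0 : ((2 * k + d : ℕ) : Fin n) = 0 := by rw [← hn]; exact Fin.natCast_self n
    have : (((0 * k : ℕ) : Fin n) - ((2 * t + 1 - 1) * k : ℕ)) = ((t * d : ℕ) : Fin n) := by
      push_cast at hn0 ⊢
      linear_combination (-t : Fin n) * hn0
    rw [this, Fin.val_natCast, Nat.mod_eq_of_lt (by omega)]
    constructor <;> omega

/-- The Kneser graph `KG(n,k)` with `n ≥ 2k+1` contains a cycle of odd length
`2⌈k/(n-2k)⌉ + 1`. -/
theorem kneser_has_odd_cycle (n k : ℕ) (hk : 0 < k) (hn : 2 * k + 1 ≤ n) :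
    ∃ (v : {A : Finset (Fin n) // A.card = k}) (w : (kneserGraph n k).Walk v v),
      w.IsCycle ∧ w.length = 2 * (⌈(k : ℚ) / ((n : ℚ) - 2 * k)⌉).toNat + 1 := by
  have hdenom : (n : ℚ) - 2 * k = ((n - 2 * k : ℕ) : ℚ) := by
    rw [Nat.cast_sub (by omega)]; push_cast; ring
  rw [hdenom]
  set t := ⌈(k : ℚ) / ((n - 2 * k : ℕ) : ℚ)⌉.toNat
  have ht : t * (n - 2 * k) ∈ Set.Ico k (k + (n - 2 * k)) := ceil_div_toNat_mul_mem_Ico (by omega)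
  have ht0 : 0 < t := Nat.pos_of_ne_zero fun h => by simp [h] at ht; omega
  exact (cycleGraph_isContained_iff (by omega)).mp
    (cycleGraph_isContained_kneserGraph hk (by omega) (by omega) ht)
end

section
/- Let $n, k$ be positive integers with $n \geq 2k+1$. Every closed walk of odd length in the Kneser graph $KG(n,k)$ has length at least $2\lceil k/(n-2k) \rceil + 1$. (Consequently, the smallest odd cycle of $KG(n,k)$ has length exactly $2\lceil k/(n-2k) \rceil + 1$.) -/
/-!
Write `n = 2k + t`. If `A – B – C` is a path in `KG(n,k)`, then `X ∩ A` and `C` both lie in the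
complement of `B`, so `|X ∩ C| ≥ |X ∩ A| - t`. Along a closed walk of length `2s + 1` from `X`,
the vertex reached after `2s` steps is disjoint from `X`, hence `k ≤ s t`, i.e. `s ≥ ⌈k/t⌉`.

Conversely, let `M = ⌈k/t⌉`. The translates of the arc `{0, …, k-1}` of `ℤ/n` by
`0, -k, -2k, …, -2Mk` form an odd cycle: consecutive ones are disjoint, the last one is the
translate by `-2Mk ≡ Mt` and `k ≤ Mt ≤ k + t`, so it is disjoint from the first, and they are
pairwise distinct because `n ∤ mk` for `0 < m ≤ 2M`.
-/

open SimpleGraph Finset Function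

theorem Finset.card_inter_add_card_add_card_le {α : Type*} [Fintype α] [DecidableEq α]
    (X : Finset α) {A B C : Finset α} (hAB : Disjoint A B) (hBC : Disjoint B C) :
    #(X ∩ A) + #B + #C ≤ Fintype.card α + #(X ∩ C) := by
  have hsub : X ∩ A ∪ C ⊆ Bᶜ := subset_compl_iff_disjoint_right.2 <|
    disjoint_union_left.2 ⟨hAB.mono_left inter_subset_right, hBC.symm⟩
  have hunion := card_union_add_card_inter (X ∩ A) C
  have hinter : #(X ∩ A ∩ C) ≤ #(X ∩ C) :=
    card_le_card (inter_subset_inter_right inter_subset_left)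
  have hcompl := card_le_card hsub
  rw [card_compl] at hcompl
  have := card_le_univ B
  omega

theorem Int.toNat_ceil_div_le_iff {k t s : ℕ} (ht : 0 < t) :
    (⌈(k : ℚ) / t⌉).toNat ≤ s ↔ k ≤ s * t := by
  rw [Int.toNat_le, Int.ceil_le, div_le_iff₀ (by exact_mod_cast ht)]
  exact_mod_cast Iff.rfl

/-- If `mk = (2k + t) r`, then `2r < m` and `k ≤ rt`; the bound `Mt < k + t` forbids both. -/
theorem Nat.not_dvd_mul_of_le_two_mul {k t M m : ℕ} (hk : 0 < k) (ht : 0 < t)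
    (hM : M * t < k + t) (hm₀ : 0 < m) (hm : m ≤ 2 * M) : ¬ 2 * k + t ∣ m * k := by
  rintro ⟨r, hr⟩
  have hr₀ : 0 < r := Nat.pos_of_ne_zero (by rintro rfl; simp at hr; omega)
  have h2r : 2 * r < m := by
    by_contra! h
    nlinarith
  have hrM : r + 1 ≤ M := by omega
  nlinarith

theorem SimpleGraph.exists_isCycle_of_injOn_of_adj {V : Type*} {G : SimpleGraph V} {N : ℕ}
    (hN : 3 ≤ N) (f : ℕ → V) (hf : Set.InjOn f (Set.Iio N))
    (hadj : ∀ i, i + 1 < N → G.Adj (f i) (f (i + 1))) (hclose : G.Adj (f (N - 1)) (f 0)) :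
    ∃ (v : V) (p : G.Walk v v), p.IsCycle ∧ p.length = N := by
  refine (cycleGraph_isContained_iff hN).1 ⟨Hom.toCopy ⟨fun i => f i, fun {u v} huv => ?_⟩ ?_⟩
  · wlog h : (u - v).val = 1 generalizing u v
    · exact (this huv.symm (cycleGraph_adj'.1 huv |>.resolve_left h)).symm
    rcases le_or_gt v u with hvu | hvu
    · rw [Fin.coe_sub_iff_le.2 hvu] at h
      rw [show (u : ℕ) = v + 1 by omega]
      exact (hadj v (by omega)).symm
    · rw [Fin.coe_sub_iff_lt.2 hvu] at h
      rw [show (u : ℕ) = 0 by omega, show (v : ℕ) = N - 1 by omega]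
      exact hclose.symm
  · exact fun u v huv => Fin.ext (hf u.2 v.2 huv)

namespace Fin

variable {n k : ℕ} [NeZero n]

def arc (k : ℕ) (c : Fin n) : Finset (Fin n) :=
  ({x | x.val < k} : Finset (Fin n)).map (Equiv.subRight c).toEmbedding

theorem mem_arc {c x : Fin n} : x ∈ arc k c ↔ (x + c).val < k := by
  simp [arc]

theorem card_arc (hk : k ≤ n) (c : Fin n) : #(arc k c) = k := by
  rw [arc, card_map, Fin.card_filter_val_lt, min_eq_right hk]

theorem disjoint_arc {c d : Fin n} (h₁ : k ≤ (d - c).val) (h₂ : (d - c).val + k ≤ n) :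
    Disjoint (arc k c) (arc k d) := by
  refine disjoint_left.2 fun x hc hd => ?_
  rw [mem_arc] at hc hd
  rw [show x + d = x + c + (d - c) by abel, Fin.val_add (x + c), Nat.mod_eq_of_lt (by omega)] at hd
  exact hd.not_ge (h₁.trans (Nat.le_add_left _ _))

theorem arc_injective (hk : 0 < k) (hkn : 2 * k ≤ n) : Injective (arc (n := n) k) := by
  intro c d h
  have hd : (-c + d).val < k := mem_arc.1 (h ▸ mem_arc.2 (by simpa using hk))
  have hc : (-d + c).val < k := mem_arc.1 (h.symm ▸ mem_arc.2 (by simpa using hk))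
  have hsum := congrArg Fin.val (add_neg_cancel (-c + d))
  rw [Fin.val_add, neg_add_rev, neg_neg, Nat.mod_eq_of_lt (by omega), Fin.val_zero] at hsum
  exact neg_add_eq_zero.1 (Fin.ext (Nat.add_eq_zero_iff.1 hsum).1)

end Fin

namespace kneserGraph

variable {n k : ℕ}

theorem adj_iff_disjoint (hk : 0 < k) {X Y : {A : Finset (Fin n) // #A = k}} :
    (kneserGraph n k).Adj X Y ↔ Disjoint X.1 Y.1 := by
  refine ⟨And.right, fun h => ⟨?_, h⟩⟩
  rintro rfl
  rw [disjoint_self_iff_empty] at h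
  have := X.2
  simp [h] at this
  omega

theorem le_card_inter_getVert {u v : {A : Finset (Fin n) // #A = k}}
    (w : (kneserGraph n k).Walk u v) {i : ℕ} (hi : 2 * i ≤ w.length) :
    k * (2 * i + 1) ≤ #(u.1 ∩ (w.getVert (2 * i)).1) + i * n := by
  induction i with
  | zero => simp [u.2]
  | succ i ih =>
    have key := card_inter_add_card_add_card_le u.1
      (w.adj_getVert_succ (i := 2 * i) (by omega)).2
      (w.adj_getVert_succ (i := 2 * i + 1) (by omega)).2
    rw [Fintype.card_fin, (w.getVert _).2, (w.getVert _).2] at key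
    have := ih (by omega)
    rw [show 2 * (i + 1) = 2 * i + 1 + 1 by ring]
    linarith

theorem mul_length_le {v : {A : Finset (Fin n) // #A = k}} (w : (kneserGraph n k).Walk v v)
    {s : ℕ} (hs : w.length = 2 * s + 1) : k * w.length ≤ s * n := by
  have h := le_card_inter_getVert w (i := s) (by omega)
  have hlast := w.adj_getVert_succ (i := 2 * s) (by omega)
  rw [show 2 * s + 1 = w.length by omega, Walk.getVert_length] at hlast
  rwa [disjoint_iff_inter_eq_empty.1 hlast.2.symm, card_empty, zero_add, ← hs] at h

open Fin.NatCast in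
theorem exists_isCycle_length {t M : ℕ} (hk : 0 < k) (ht : 0 < t) (hkM : k ≤ M * t)
    (hMk : M * t < k + t) :
    ∃ (v : {A : Finset (Fin (2 * k + t)) // #A = k}) (p : (kneserGraph (2 * k + t) k).Walk v v),
      p.IsCycle ∧ p.length = 2 * M + 1 := by
  have : NeZero (2 * k + t) := ⟨by omega⟩
  have hM : 0 < M := Nat.pos_of_ne_zero fun h => by simp [h] at hkM; omega
  let v (a : ℕ) : {A : Finset (Fin (2 * k + t)) // #A = k} :=
    ⟨Fin.arc k (a : Fin (2 * k + t)), Fin.card_arc (by omega) _⟩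
  have hadj (a e : ℕ) (h₁ : k ≤ e) (h₂ : e + k ≤ 2 * k + t) :
      (kneserGraph (2 * k + t) k).Adj (v a) (v (a + e)) := by
    refine (adj_iff_disjoint hk).2 (Fin.disjoint_arc ?_ ?_) <;>
      rwa [Nat.cast_add, add_sub_cancel_left, Fin.val_natCast, Nat.mod_eq_of_lt (by omega)]
  refine exists_isCycle_of_injOn_of_adj (by omega) (fun i => v (i * k)) ?_
    (fun i _ => by simpa [add_mul] using hadj (i * k) k le_rfl (by omega)) ?_
  · intro i hi j hj hij
    wlog hlt : i < j generalizing i j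
    · rcases (not_lt.1 hlt).lt_or_eq with h | h
      · exact (this hj hi hij.symm h).symm
      · exact h.symm
    exfalso
    have hcast := congrArg Fin.val (Fin.arc_injective hk (by omega) (congrArg Subtype.val hij))
    rw [Fin.val_natCast, Fin.val_natCast] at hcast
    have hdvd := (Nat.modEq_iff_dvd' (Nat.mul_le_mul_right k hlt.le)).1 hcast
    rw [← Nat.sub_mul] at hdvd
    exact Nat.not_dvd_mul_of_le_two_mul hk ht hMk (by omega) (by simp at hj; omega) hdvd
  · have hwrap : v (2 * M * k + M * t) = v 0 := by
      have : ((2 * M * k + M * t : ℕ) : Fin (2 * k + t)) = ((0 : ℕ) : Fin (2 * k + t)) := by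
        refine Fin.ext ?_
        rw [Fin.val_natCast, Fin.val_natCast, show 2 * M * k + M * t = M * (2 * k + t) by ring,
          Nat.mul_mod_left, Nat.zero_mod]
      simp only [v, this]
    simpa [hwrap] using hadj (2 * M * k) (M * t) hkM (by omega)

end kneserGraph

/-- In `KG(n,k)` with `n ≥ 2k+1`, every closed walk of odd length has length at
least `2⌈k/(n-2k)⌉ + 1`; consequently the smallest odd cycle of `KG(n,k)` has
length exactly `2⌈k/(n-2k)⌉ + 1`. -/
theorem kneser_odd_closed_walk_length (n k : ℕ) (hk : 0 < k) (hn : 2 * k + 1 ≤ n) :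
    (∀ (v : {A : Finset (Fin n) // A.card = k}) (w : (kneserGraph n k).Walk v v),
      Odd w.length → 2 * (⌈(k : ℚ) / ((n : ℚ) - 2 * k)⌉).toNat + 1 ≤ w.length) ∧
    (∃ (v : {A : Finset (Fin n) // A.card = k}) (w : (kneserGraph n k).Walk v v),
      w.IsCycle ∧ Odd w.length ∧
        w.length = 2 * (⌈(k : ℚ) / ((n : ℚ) - 2 * k)⌉).toNat + 1) := by
  obtain ⟨t, rfl⟩ : ∃ t, n = 2 * k + t := ⟨n - 2 * k, by omega⟩
  have ht : 0 < t := by omega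
  have hcast : ((2 * k + t : ℕ) : ℚ) - 2 * k = t := by push_cast; ring
  have hM (s : ℕ) : (⌈(k : ℚ) / ((2 * k + t : ℕ) - 2 * k)⌉).toNat ≤ s ↔ k ≤ s * t := by
    rw [hcast]; exact Int.toNat_ceil_div_le_iff ht
  set M := (⌈(k : ℚ) / ((2 * k + t : ℕ) - 2 * k)⌉).toNat
  refine ⟨fun v w ⟨s, hs⟩ => ?_, ?_⟩
  · have hlen := kneserGraph.mul_length_le w hs
    have : M ≤ s := (hM s).2 (by rw [hs] at hlen; linarith)
    omega
  · have hM₀ : 0 < M := Nat.pos_of_ne_zero fun h => hk.ne' (by simpa using (hM 0).1 h.le)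
    obtain ⟨v, p, hp, hlen⟩ := kneserGraph.exists_isCycle_length hk ht ((hM M).1 le_rfl)
      (by have := (hM (M - 1)).not.1 (by omega); rw [Nat.sub_one_mul] at this; omega)
    exact ⟨v, p, hp, hlen ▸ odd_two_mul_add_one M, hlen⟩
end

section
/- Let $n, k$ be positive integers with $n \geq 2k+1$, and let $A, B$ be two $k$-element subsets of $\{1, \ldots, n\}$ with $|A \cap B| = c$. Then in the Kneser graph $KG(n,k)$ there is a walk from $A$ to $B$ of length exactly $2\lceil (k-c)/(n-2k) \rceil$. -/
open Finset

theorem Finset.exists_card_eq_card_inter_add_le_of_le_card_sdiff {α : Type*} [DecidableEq α]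
    {A B : Finset α} {t : ℕ} (hBA : #B ≤ #A) (ht : t ≤ #(B \ A)) :
    ∃ A' : Finset α, #A' = #A ∧ #(A ∩ B) + t ≤ #(A' ∩ B) ∧ #(A ∪ A') ≤ #A + t := by
  obtain ⟨T, hTBA, hT⟩ := exists_subset_card_eq ht
  have hdisj : Disjoint (A ∩ B) T :=
    disjoint_of_subset_left inter_subset_left (disjoint_of_subset_right hTBA disjoint_sdiff)
  have hcore : #((A ∩ B) ∪ T) = #(A ∩ B) + t := by rw [card_union_of_disjoint hdisj, hT]
  have hcore_le : #((A ∩ B) ∪ T) ≤ #A := by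
    have := card_sdiff_add_card_inter B A
    rw [inter_comm] at this
    omega
  obtain ⟨A', hcoreA', hA'AT, hA'⟩ := exists_subsuperset_card_eq
    (union_subset_union inter_subset_left subset_rfl) hcore_le
    (card_le_card (subset_union_left : A ⊆ A ∪ T))
  refine ⟨A', hA', ?_, ?_⟩
  · rw [← hcore]
    refine card_le_card (subset_inter hcoreA' (union_subset inter_subset_right ?_))
    exact hTBA.trans sdiff_subset
  · calc #(A ∪ A') ≤ #(A ∪ T) := card_le_card (union_subset subset_union_left hA'AT)
      _ ≤ #A + t := hT ▸ card_union_le A T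

namespace kneserGraph

variable {n k : ℕ}

theorem adj_of_disjoint (hk : 0 < k) {X Y : {A : Finset (Fin n) // A.card = k}}
    (h : Disjoint X.1 Y.1) : (kneserGraph n k).Adj X Y := by
  refine ⟨fun hXY => ?_, h⟩
  rw [hXY, disjoint_self_iff_empty] at h
  have hY := Y.2
  rw [h, card_empty] at hY
  omega

theorem exists_adj_adj_of_card_union_add_le (hk : 0 < k)
    (X Y : {A : Finset (Fin n) // A.card = k}) (h : #(X.1 ∪ Y.1) + k ≤ n) :
    ∃ Z, (kneserGraph n k).Adj X Z ∧ (kneserGraph n k).Adj Z Y := by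
  obtain ⟨C, hC, hCk⟩ := exists_subset_card_eq (s := (X.1 ∪ Y.1)ᶜ) (n := k)
    (by rw [card_compl, Fintype.card_fin]; omega)
  have hdisj : Disjoint (X.1 ∪ Y.1) C := subset_compl_iff_disjoint_left.mp hC
  exact ⟨⟨C, hCk⟩, adj_of_disjoint hk (disjoint_of_subset_left subset_union_left hdisj),
    adj_of_disjoint hk (disjoint_of_subset_left subset_union_right hdisj).symm⟩

theorem exists_walk_length_eq_two_mul (hk : 0 < k) (hn : 2 * k ≤ n) (j : ℕ) :
    ∀ X Y : {A : Finset (Fin n) // A.card = k}, k - #(X.1 ∩ Y.1) ≤ j * (n - 2 * k) →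
      ∃ w : (kneserGraph n k).Walk X Y, w.length = 2 * j := by
  induction j with
  | zero =>
    intro X Y hdist
    have hXi : X.1 ∩ Y.1 = X.1 := eq_of_subset_of_card_le inter_subset_left (by rw [X.2]; omega)
    have hYi : X.1 ∩ Y.1 = Y.1 := eq_of_subset_of_card_le inter_subset_right (by rw [Y.2]; omega)
    have hXY : X = Y := Subtype.ext (hXi.symm.trans hYi)
    subst hXY
    exact ⟨.nil, rfl⟩
  | succ j ih =>
    intro X Y hdist
    have hsdiff : #(Y.1 \ X.1) = k - #(X.1 ∩ Y.1) := by rw [card_sdiff, Y.2]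
    obtain ⟨A', hA', hcloser, hunion⟩ :=
      exists_card_eq_card_inter_add_le_of_le_card_sdiff (t := min (n - 2 * k) (k - #(X.1 ∩ Y.1)))
        (X.2.trans Y.2.symm).ge (hsdiff ▸ min_le_right _ _)
    rw [X.2] at hA' hunion
    obtain ⟨Z, hXZ, hZA'⟩ := exists_adj_adj_of_card_union_add_le hk X ⟨A', hA'⟩
      (by change #(X.1 ∪ A') + k ≤ n; omega)
    obtain ⟨w, hw⟩ := ih ⟨A', hA'⟩ Y (by simp only [Nat.add_mul] at hdist ⊢; omega)
    refine ⟨.cons hXZ (.cons hZA' w), ?_⟩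
    rw [SimpleGraph.Walk.length_cons, SimpleGraph.Walk.length_cons, hw]
    ring

end kneserGraph

theorem le_toNat_ceil_div_mul {K : Type*} [Field K] [LinearOrder K] [IsStrictOrderedRing K]
    [FloorRing K] (a : K) {d : K} (hd : 0 < d) : a ≤ (⌈a / d⌉.toNat : K) * d := by
  rw [← div_le_iff₀ hd]
  exact (Int.le_ceil _).trans (by exact_mod_cast Int.self_le_toNat _)

/-- In `KG(n,k)` with `n ≥ 2k+1`, between any two vertices `A, B` with
`|A ∩ B| = c` there is a walk of (even) length `2⌈(k-c)/(n-2k)⌉`. -/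
theorem kneser_even_path (n k c : ℕ) (hk : 0 < k) (hn : 2 * k + 1 ≤ n)
    (A B : Finset (Fin n)) (hA : A.card = k) (hB : B.card = k)
    (hc : (A ∩ B).card = c) :
    ∃ w : (kneserGraph n k).Walk ⟨A, hA⟩ ⟨B, hB⟩,
      w.length = 2 * (⌈((k : ℚ) - (c : ℚ)) / ((n : ℚ) - 2 * k)⌉).toNat := by
  subst hc
  have hck : #(A ∩ B) ≤ k := hA ▸ card_le_card inter_subset_left
  have hbound := le_toNat_ceil_div_mul ((k : ℚ) - #(A ∩ B)) (d := (n : ℚ) - 2 * k)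
    (by rw [sub_pos]; exact_mod_cast hn)
  refine kneserGraph.exists_walk_length_eq_two_mul hk (by omega) _ _ _ ?_
  qify [hck, (by omega : 2 * k ≤ n)]
  exact hbound
end

section
/- Let $n, k$ be positive integers with $n \geq 2k+1$, and let $A, B$ be two $k$-element subsets of $\{1, \ldots, n\}$ with $|A \cap B| = c$. Then in the Kneser graph $KG(n,k)$ there is a walk from $A$ to $B$ of length exactly $2\lceil c/(n-2k) \rceil + 1$. -/
/-!
Write `d = n - 2k`. Given `A, B` with `|A ∩ B| = c`, pick `C` disjoint from `A` containing as much
of `B \ A` as possible, so that `B \ C = A ∩ B`; then pick `A'` disjoint from `C` meeting `B` as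
little as possible. The complement of `C` has `n - k` points, only `c` of them in `B`, so
`|A' ∩ B| = max(c - d, 0)`. Hence every two steps of a walk lower the intersection with `B` by `d`, and
after `⌈c / d⌉` double steps one more edge reaches `B`.
-/

open Finset

namespace Finset

variable {α : Type*} [DecidableEq α]

theorem exists_subset_card_eq_card_inter_eq {U B : Finset α} {m : ℕ} (hm : m ≤ #U) :
    ∃ X ⊆ U, #X = m ∧ #(X ∩ B) = m - #(U \ B) := by
  rcases le_total m #(U \ B) with h | h
  · obtain ⟨X, hXU, hX⟩ := exists_subset_card_eq h
    have hXB : Disjoint X B := disjoint_of_subset_left hXU sdiff_disjoint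
    refine ⟨X, hXU.trans sdiff_subset, hX, ?_⟩
    rw [disjoint_iff_inter_eq_empty.mp hXB, card_empty]
    omega
  · obtain ⟨X, hUX, hXU, hX⟩ := exists_subsuperset_card_eq sdiff_subset h hm
    have hXB : X \ B = U \ B :=
      (sdiff_subset_sdiff hXU le_rfl).antisymm (subset_sdiff.mpr ⟨hUX, sdiff_disjoint⟩)
    refine ⟨X, hXU, hX, ?_⟩
    have := card_inter_add_card_sdiff X B
    rw [hXB] at this
    omega

theorem exists_disjoint_disjoint_card_inter_eq [Fintype α] {A B : Finset α} {k : ℕ}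
    (hA : #A = k) (hB : #B = k) (hk : 2 * k ≤ Fintype.card α) :
    ∃ C A', #C = k ∧ #A' = k ∧ Disjoint A C ∧ Disjoint C A' ∧
      #(A' ∩ B) = #(A ∩ B) - (Fintype.card α - 2 * k) := by
  obtain ⟨C, hCA, hC, hCB⟩ :=
    exists_subset_card_eq_card_inter_eq (U := Aᶜ) (B := Bᶜ) (m := k) (by rw [card_compl]; omega)
  obtain ⟨A', hA'C, hA', hA'B⟩ :=
    exists_subset_card_eq_card_inter_eq (U := Cᶜ) (B := B) (m := k) (by rw [card_compl]; omega)
  refine ⟨C, A', hC, hA', subset_compl_iff_disjoint_left.mp hCA,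
    subset_compl_iff_disjoint_left.mp hA'C, ?_⟩
  rw [compl_sdiff_compl, card_sdiff, hB] at hCB
  rw [show Cᶜ \ B = Bᶜ \ C by rw [sdiff_eq_inter_compl, sdiff_eq_inter_compl, inter_comm],
    card_sdiff, card_compl, hB] at hA'B
  have := card_le_card (inter_subset_left (s₁ := A) (s₂ := B))
  omega

end Finset

theorem kneserGraph_adj_of_disjoint {n k : ℕ} (hk : 0 < k) {X Y : {A : Finset (Fin n) // #A = k}}
    (h : Disjoint X.1 Y.1) : (kneserGraph n k).Adj X Y := by
  refine ⟨?_, h⟩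
  rintro rfl
  have := X.2
  rw [disjoint_self.mp h, bot_eq_empty, card_empty] at this
  omega

theorem kneserGraph_exists_walk_of_card_inter_le {n k : ℕ} (hk : 0 < k) (hn : 2 * k ≤ n)
    (j : ℕ) (X Y : {A : Finset (Fin n) // #A = k}) (hXY : #(X.1 ∩ Y.1) ≤ j * (n - 2 * k)) :
    ∃ w : (kneserGraph n k).Walk X Y, w.length = 2 * j + 1 := by
  induction j generalizing X with
  | zero =>
    have hdisj : Disjoint X.1 Y.1 := by
      rw [disjoint_iff_inter_eq_empty, ← card_eq_zero]
      omega
    exact ⟨.cons (kneserGraph_adj_of_disjoint hk hdisj) .nil, rfl⟩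
  | succ j ih =>
    obtain ⟨C, X', hC, hX', hXC, hCX', hX'Y⟩ := exists_disjoint_disjoint_card_inter_eq X.2 Y.2
      (by rwa [Fintype.card_fin])
    rw [Fintype.card_fin] at hX'Y
    obtain ⟨w, hw⟩ := ih ⟨X', hX'⟩ (by simp only [hX'Y]; rw [add_one_mul] at hXY; omega)
    refine ⟨.cons (kneserGraph_adj_of_disjoint hk (Y := ⟨C, hC⟩) hXC)
      (.cons (kneserGraph_adj_of_disjoint hk (Y := ⟨X', hX'⟩) hCX') w), ?_⟩
    rw [SimpleGraph.Walk.length_cons, SimpleGraph.Walk.length_cons, hw]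
    ring

theorem Nat.le_ceil_div_mul (c d : ℕ) (hd : 0 < d) : c ≤ ⌈(c : ℚ) / d⌉₊ * d := by
  have := Nat.le_ceil ((c : ℚ) / d)
  rw [div_le_iff₀ (by exact_mod_cast hd)] at this
  exact_mod_cast this

/-- In `KG(n,k)` with `n ≥ 2k+1`, between any two vertices `A, B` with
`|A ∩ B| = c` there is a walk of (odd) length `2⌈c/(n-2k)⌉ + 1`. -/
theorem kneser_odd_path (n k c : ℕ) (hk : 0 < k) (hn : 2 * k + 1 ≤ n)
    (A B : Finset (Fin n)) (hA : A.card = k) (hB : B.card = k)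
    (hc : (A ∩ B).card = c) :
    ∃ w : (kneserGraph n k).Walk ⟨A, hA⟩ ⟨B, hB⟩,
      w.length = 2 * (⌈(c : ℚ) / ((n : ℚ) - 2 * k)⌉).toNat + 1 := by
  have hd : ((n : ℚ) - 2 * k) = ((n - 2 * k : ℕ) : ℚ) := by
    rw [Nat.cast_sub (by omega)]
    push_cast
    ring
  rw [hd, Int.ceil_toNat]
  exact kneserGraph_exists_walk_of_card_inter_le hk (by omega) _ ⟨A, hA⟩ ⟨B, hB⟩
    (hc ▸ Nat.le_ceil_div_mul c (n - 2 * k) (by omega))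
end

section
/- Let $n, k$ be positive integers with $n \geq 2k+1$. The diameter of the bipartite Kneser graph $B(n,k)$ equals $2\lceil k/(n-2k) \rceil + 1$; that is, any two vertices of $B(n,k)$ are at distance at most $2\lceil k/(n-2k) \rceil + 1$, and there exist two vertices at distance exactly $2\lceil k/(n-2k) \rceil + 1$ (for instance the two vertices $(A,0)$ and $(A,1)$ for any $k$-subset $A$). -/
/-- The bipartite Kneser graph `B(n,k)` (the incidence graph of the
neighborhood geometry of the Kneser graph `KG(n,k)`): vertices are pairs
`(A, ε)` with `A` a `k`-subset of `{1, …, n}` and `ε ∈ {0,1}` (a `Bool`), with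
`(A, 0)` adjacent to `(B, 1)` iff `A` and `B` are disjoint. -/
def bipartiteKneser (n k : ℕ) :
    SimpleGraph ({A : Finset (Fin n) // A.card = k} × Bool) where
  Adj X Y := X.2 ≠ Y.2 ∧ Disjoint X.1.1 Y.1.1
  symm := ⟨fun _ _ h => ⟨h.1.symm, h.2.symm⟩⟩
  loopless := ⟨fun _ h => h.1 rfl⟩

/-!
Lower bound: fix a `k`-set `A`. The potential `2 #(A ∩ X)` on the side `false`, and
`2 (k - #(A ∩ X)) - (n - 2k)` on the side `true`, changes by at most `n - 2k` along each edge,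
because two disjoint `k`-sets together meet `A` in at most `k` and at least `k - (n - 2k)` points.
It falls from `2k` at `(A, false)` to `-(n - 2k)` at `(A, true)`, and a walk between these has odd
length `2m + 1`, so `k ≤ m (n - 2k)`.

Upper bound: two `k`-sets whose union misses at least `k` points have a common neighbour, so a
walk of length two can exchange `n - 2k` elements of a `k`-set for elements of a target `k`-set.
After `⌈k / (n - 2k)⌉` such round trips any `k`-set on the same side is reached, and one more
edge reaches any vertex on the other side.
-/

open SimpleGraph Finset

theorem Int.toNat_ceil_div_le_iff_s4 {K : Type*} [Field K] [LinearOrder K] [IsStrictOrderedRing K]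
    [FloorRing K] {k m d : ℕ} (hd : 0 < d) : (⌈(k : K) / d⌉).toNat ≤ m ↔ k ≤ m * d := by
  rw [Int.toNat_le, Int.ceil_le, div_le_iff₀ (by positivity)]
  norm_cast

namespace Finset

variable {α : Type*} [DecidableEq α]

theorem exists_card_eq_disjoint [Fintype α] {s : Finset α} {k : ℕ}
    (h : #s + k ≤ Fintype.card α) : ∃ t : Finset α, #t = k ∧ Disjoint s t := by
  obtain ⟨t, hts, htk⟩ := exists_subset_card_eq (s := sᶜ) (n := k) (by rw [card_compl]; omega)
  exact ⟨t, htk, disjoint_of_subset_right hts disjoint_compl_right⟩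

theorem exists_exchange_toward {X B : Finset α} (hXB : #X = #B) (d : ℕ) :
    ∃ X' : Finset α, #X' = #X ∧ #(X' \ X) ≤ d ∧ #(X' \ B) = #(X \ B) - d := by
  have hj := min_le_right d #(X \ B)
  obtain ⟨S, hSXB, hS⟩ := exists_subset_card_eq hj
  have hBX := card_sdiff_comm hXB
  obtain ⟨T, hTBX, hT⟩ := exists_subset_card_eq (hBX ▸ hj)
  have hSX : S ⊆ X := hSXB.trans sdiff_subset
  have hTX : Disjoint (X \ S) T :=
    (disjoint_sdiff_self_left.mono_left hTBX).symm.mono_left sdiff_subset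
  have hnew : (X \ S ∪ T) \ X = T := by
    ext x; have hxT := @hTBX x; simp only [mem_sdiff, mem_union] at hxT ⊢; tauto
  have hrest : (X \ S ∪ T) \ B = (X \ B) \ S := by
    ext x
    have hxT := @hTBX x
    have hxS := @hSXB x
    simp only [mem_sdiff, mem_union] at hxT hxS ⊢
    tauto
  have hSle : #S ≤ #X := card_le_card hSX
  refine ⟨X \ S ∪ T, ?_, ?_, ?_⟩
  · rw [card_union_of_disjoint hTX, card_sdiff_of_subset hSX]
    omega
  · rw [hnew, hT]; exact min_le_left _ _
  · rw [hrest, card_sdiff_of_subset hSXB, hS]; omega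

theorem card_inter_add_card_inter_of_disjoint {A X Y : Finset α} (h : Disjoint X Y) :
    #(A ∩ X) + #(A ∩ Y) = #(A ∩ (X ∪ Y)) := by
  rw [inter_union_distrib_left,
    card_union_of_disjoint (h.mono inter_subset_right inter_subset_right)]

theorem card_le_card_inter_add_card_compl [Fintype α] (A s : Finset α) :
    #A ≤ #(A ∩ s) + #sᶜ := by
  rw [← card_inter_add_card_sdiff A s]
  gcongr
  intro x; simp +contextual

end Finset

theorem SimpleGraph.Walk.le_add_length_mul {V : Type*} {G : SimpleGraph V} {f : V → ℤ} {d : ℤ}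
    (hf : ∀ ⦃a b⦄, G.Adj a b → f a ≤ f b + d) {u v : V} :
    ∀ w : G.Walk u v, f u ≤ f v + w.length * d
  | .nil => by simp
  | .cons h w => by
    have := hf h
    have := le_add_length_mul hf w
    push_cast [length_cons]
    linarith

namespace bipartiteKneser

variable {n k : ℕ}

def sideColoring : (bipartiteKneser n k).Coloring Bool := Coloring.mk Prod.snd fun h => h.1

theorem exists_walk_length_two (ε : Bool) {X Y : {A : Finset (Fin n) // #A = k}}
    (h : #(X.1 ∪ Y.1) + k ≤ n) :
    ∃ w : (bipartiteKneser n k).Walk (X, ε) (Y, ε), w.length = 2 := by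
  obtain ⟨Z, hZ, hXYZ⟩ := exists_card_eq_disjoint (h.trans_eq (Fintype.card_fin n).symm)
  have hXZ : (bipartiteKneser n k).Adj (X, ε) (⟨Z, hZ⟩, !ε) :=
    ⟨by simp, hXYZ.mono_left subset_union_left⟩
  have hZY : (bipartiteKneser n k).Adj (⟨Z, hZ⟩, !ε) (Y, ε) :=
    ⟨by simp, (hXYZ.mono_left subset_union_right).symm⟩
  exact ⟨.cons hXZ (.cons hZY .nil), rfl⟩

theorem exists_walk_of_card_sdiff_le (hn : 2 * k ≤ n) (ε : Bool) (m : ℕ) :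
    ∀ X Y : {A : Finset (Fin n) // #A = k}, #(X.1 \ Y.1) ≤ m * (n - 2 * k) →
      ∃ w : (bipartiteKneser n k).Walk (X, ε) (Y, ε), w.length ≤ 2 * m := by
  induction m with
  | zero =>
    intro X Y hXY
    have hsub : X.1 ⊆ Y.1 := by simpa using hXY
    obtain rfl : X = Y := Subtype.ext (eq_of_subset_of_card_le hsub (by rw [X.2, Y.2]))
    exact ⟨.nil, le_rfl⟩
  | succ m ih =>
    intro X Y hXY
    obtain ⟨X', hX', hX'X, hX'Y⟩ := exists_exchange_toward (X.2.trans Y.2.symm) (n - 2 * k)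
    have hunion : #(X.1 ∪ X') + k ≤ n := by
      rw [union_comm, ← card_sdiff_add_card]; omega
    obtain ⟨w₁, hw₁⟩ := exists_walk_length_two ε (Y := ⟨X', hX'.trans X.2⟩) hunion
    have hcloser : #(X' \ Y.1) ≤ m * (n - 2 * k) := by
      rw [hX'Y, Nat.sub_le_iff_le_add, ← Nat.succ_mul]; exact hXY
    obtain ⟨w₂, hw₂⟩ := ih ⟨X', hX'.trans X.2⟩ Y hcloser
    exact ⟨w₁.append w₂, by rw [Walk.length_append]; omega⟩

theorem exists_walk_length_le (hn : 2 * k ≤ n) {m : ℕ} (hm : k ≤ m * (n - 2 * k))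
    (u v : {A : Finset (Fin n) // #A = k} × Bool) :
    ∃ w : (bipartiteKneser n k).Walk u v, w.length ≤ 2 * m + 1 := by
  obtain ⟨X, ε⟩ := u
  obtain ⟨Y, ε'⟩ := v
  have hX (Z : Finset (Fin n)) : #(X.1 \ Z) ≤ m * (n - 2 * k) :=
    (card_le_card sdiff_subset).trans (X.2.trans_le hm)
  obtain rfl | hε := eq_or_ne ε ε'
  · obtain ⟨w, hw⟩ := exists_walk_of_card_sdiff_le hn ε m X Y (hX _)
    exact ⟨w, by omega⟩
  · obtain ⟨C, hC, hYC⟩ :=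
      exists_card_eq_disjoint (s := Y.1) (k := k) (by rw [Y.2, Fintype.card_fin]; omega)
    obtain ⟨w, hw⟩ := exists_walk_of_card_sdiff_le hn ε m X ⟨C, hC⟩ (hX _)
    have hCY : (bipartiteKneser n k).Adj (⟨C, hC⟩, ε) (Y, ε') := ⟨hε, hYC.symm⟩
    exact ⟨w.concat hCY, by rw [Walk.length_concat]; omega⟩

def potential (A : Finset (Fin n)) (v : {A : Finset (Fin n) // #A = k} × Bool) : ℤ :=
  if v.2 then 2 * k - 2 * #(A ∩ v.1.1) - (n - 2 * k : ℕ) else 2 * #(A ∩ v.1.1)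

theorem potential_le_of_adj {A : Finset (Fin n)} (hA : #A = k)
    ⦃u v : {A : Finset (Fin n) // #A = k} × Bool⦄ (h : (bipartiteKneser n k).Adj u v) :
    potential A u ≤ potential A v + (n - 2 * k : ℕ) := by
  rcases u with ⟨⟨X, hX⟩, ε⟩
  rcases v with ⟨⟨Y, hY⟩, ε'⟩
  obtain ⟨hε : ε ≠ ε', hXY : Disjoint X Y⟩ := h
  have hsplit := card_inter_add_card_inter_of_disjoint (A := A) hXY
  have hupper : #(A ∩ (X ∪ Y)) ≤ k := hA ▸ card_le_card inter_subset_left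
  have hlower := card_le_card_inter_add_card_compl A (X ∪ Y)
  rw [card_compl, card_union_of_disjoint hXY, hX, hY, Fintype.card_fin, hA] at hlower
  cases ε <;> cases ε' <;>
    simp only [potential, ne_eq, not_true_eq_false, Bool.false_eq_true, ↓reduceIte] at hε ⊢ <;>
    omega

theorem exists_length_eq_two_mul_add_one (A : {A : Finset (Fin n) // #A = k})
    (w : (bipartiteKneser n k).Walk (A, false) (A, true)) :
    ∃ m, w.length = 2 * m + 1 ∧ k ≤ m * (n - 2 * k) := by
  obtain ⟨m, hm⟩ :=
    (sideColoring.odd_length_iff_not_congr w).2 (iff_of_true Bool.false_ne_true rfl)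
  refine ⟨m, hm, ?_⟩
  have := w.le_add_length_mul (potential_le_of_adj A.2)
  simp only [potential, A.2, inter_self, hm] at this
  push_cast at this
  have : (k : ℤ) ≤ m * (n - 2 * k : ℕ) := by linarith
  exact_mod_cast this

end bipartiteKneser

theorem bipartiteKneser_diameter_general (n k : ℕ) (hn : 2 * k + 1 ≤ n) :
    (∀ u v : {A : Finset (Fin n) // A.card = k} × Bool,
      ∃ w : (bipartiteKneser n k).Walk u v,
        w.length ≤ 2 * (⌈(k : ℚ) / ((n : ℚ) - 2 * k)⌉).toNat + 1) ∧
    (∀ A : {A : Finset (Fin n) // A.card = k},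
      (bipartiteKneser n k).dist (A, false) (A, true) =
        2 * (⌈(k : ℚ) / ((n : ℚ) - 2 * k)⌉).toNat + 1) := by
  have hcast : (n : ℚ) - 2 * k = (n - 2 * k : ℕ) := by
    push_cast [Nat.cast_sub (by omega : 2 * k ≤ n)]; ring
  rw [hcast]
  set t := (⌈(k : ℚ) / (n - 2 * k : ℕ)⌉).toNat
  have ht (m : ℕ) : t ≤ m ↔ k ≤ m * (n - 2 * k) := Int.toNat_ceil_div_le_iff_s4 (by omega)
  have upper := bipartiteKneser.exists_walk_length_le (by omega) ((ht t).1 le_rfl)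
  refine ⟨upper, fun A => le_antisymm ?_ ?_⟩
  · obtain ⟨w, hw⟩ := upper (A, false) (A, true)
    exact (dist_le w).trans hw
  · obtain ⟨w, hw⟩ := upper (A, false) (A, true)
    obtain ⟨p, hp⟩ := Reachable.exists_walk_length_eq_dist ⟨w⟩
    obtain ⟨m, hlen, hkm⟩ := bipartiteKneser.exists_length_eq_two_mul_add_one A p
    have := (ht m).2 hkm
    omega

/-- For `n ≥ 2k+1`, the diameter of `B(n,k)` equals `2⌈k/(n-2k)⌉ + 1`: any two
vertices are at distance at most `2⌈k/(n-2k)⌉ + 1` (there is a walk of at most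
that length joining them), and the two vertices `(A,0)` and `(A,1)` are at
distance exactly `2⌈k/(n-2k)⌉ + 1` for every `k`-subset `A`. -/
theorem bipartiteKneser_diameter (n k : ℕ) (hk : 0 < k) (hn : 2 * k + 1 ≤ n) :
    (∀ u v : {A : Finset (Fin n) // A.card = k} × Bool,
      ∃ w : (bipartiteKneser n k).Walk u v,
        w.length ≤ 2 * (⌈(k : ℚ) / ((n : ℚ) - 2 * k)⌉).toNat + 1) ∧
    (∀ A : {A : Finset (Fin n) // A.card = k},
      (bipartiteKneser n k).dist (A, false) (A, true) =
        2 * (⌈(k : ℚ) / ((n : ℚ) - 2 * k)⌉).toNat + 1) :=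
  bipartiteKneser_diameter_general n k hn
end

section
/- Let $k$ be a positive integer and let $n = 2k+1$. The girth of the bipartite Kneser graph $B(n,k)$ equals $6$; that is, $B(2k+1,k)$ contains a cycle of length $6$ and contains no cycle of length less than $6$. -/
open Finset SimpleGraph

namespace SimpleGraph

variable {V : Type*} {G : SimpleGraph V}

lemma not_cycleGraph_four_isContained
    (hG : ∀ u v, u ≠ v → (G.commonNeighbors u v).Subsingleton) : ¬ cycleGraph 4 ⊑ G := by
  rintro ⟨f⟩
  have hadj : ∀ i j : Fin 4, (cycleGraph 4).Adj i j → G.Adj (f i) (f j) :=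
    fun _ _ h => f.toHom.map_adj h
  have h13 : f 1 = f 3 :=
    hG (f 0) (f 2) (f.injective.ne (by decide))
      ⟨hadj 0 1 (by decide), hadj 2 1 (by decide)⟩ ⟨hadj 0 3 (by decide), hadj 2 3 (by decide)⟩
  exact absurd (f.injective h13) (by decide)

lemma six_le_length_of_isCycle (c : G.Coloring Bool)
    (hG : ∀ u v, u ≠ v → (G.commonNeighbors u v).Subsingleton)
    {v : V} {w : G.Walk v v} (hw : w.IsCycle) : 6 ≤ w.length := by
  have h3 := hw.three_le_length
  obtain ⟨m, hm⟩ : Even w.length := (c.even_length_iff_congr w).mpr Iff.rfl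
  have h4 : w.length ≠ 4 := fun h4 => not_cycleGraph_four_isContained hG
    ((cycleGraph_isContained_iff (by norm_num)).mpr ⟨v, w, hw, h4⟩)
  omega

end SimpleGraph

lemma Finset.eq_compl_union_of_disjoint {α : Type*} [Fintype α] [DecidableEq α] {k : ℕ}
    (hα : Fintype.card α ≤ 2 * k + 1) {A B C : Finset α} (hA : #A = k) (hB : #B = k)
    (hC : #C = k) (hAB : A ≠ B) (hCA : Disjoint C A) (hCB : Disjoint C B) : C = (A ∪ B)ᶜ := by
  have hunion : k < #(A ∪ B) := by
    by_contra! h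
    have hAU : A = A ∪ B := eq_of_subset_of_card_le subset_union_left (by omega)
    exact hAB (eq_of_subset_of_card_le (hAU ▸ subset_union_right) (by omega)).symm
  have hcompl := card_compl_add_card (A ∪ B)
  refine eq_of_subset_of_card_le ?_ (by omega)
  exact subset_compl_iff_disjoint_right.mpr (disjoint_union_right.mpr ⟨hCA, hCB⟩)

lemma bipartiteKneser_commonNeighbors_subsingleton {n k : ℕ} (hn : n ≤ 2 * k + 1)
    (u v : {A : Finset (Fin n) // A.card = k} × Bool) (huv : u ≠ v) :
    ((bipartiteKneser n k).commonNeighbors u v).Subsingleton := by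
  rintro x ⟨⟨hux, hUX⟩, ⟨hvx, hVX⟩⟩ y ⟨⟨huy, hUY⟩, ⟨hvy, hVY⟩⟩
  have hside : u.2 = v.2 := by revert hux hvx; cases u.2 <;> cases v.2 <;> cases x.2 <;> decide
  have hside' : x.2 = y.2 := by revert hux huy; cases u.2 <;> cases x.2 <;> cases y.2 <;> decide
  have hUV : u.1.1 ≠ v.1.1 := fun h => huv (Prod.ext (Subtype.ext h) hside)
  have hα : Fintype.card (Fin n) ≤ 2 * k + 1 := (Fintype.card_fin n).trans_le hn
  have hx := eq_compl_union_of_disjoint hα u.1.2 v.1.2 x.1.2 hUV hUX.symm hVX.symm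
  have hy := eq_compl_union_of_disjoint hα u.1.2 v.1.2 y.1.2 hUV hUY.symm hVY.symm
  exact Prod.ext (Subtype.ext (hx.trans hy.symm)) hside'

def bipartiteKneser.sideColoring_s5 (n k : ℕ) : (bipartiteKneser n k).Coloring Bool :=
  Coloring.mk Prod.snd fun h => h.1

lemma cycleGraph_six_isContained_bipartiteKneser {n k : ℕ} (x : Fin 3 → Fin n)
    (hx : Function.Injective x) (B : Bool → Finset (Fin n)) (hB : Disjoint (B false) (B true))
    (hBcard : ∀ b, #(B b) + 1 = k) (hxB : ∀ i b, x i ∉ B b) :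
    cycleGraph 6 ⊑ bipartiteKneser n k := by
  let side (i : Fin 6) : Bool := i.val % 2 == 1
  let point (i : Fin 6) : Fin 3 := ⟨i.val % 3, Nat.mod_lt _ (by norm_num)⟩
  have hcyc : ∀ i j, (cycleGraph 6).Adj i j → side i ≠ side j ∧ point i ≠ point j := by decide
  have hcrt : ∀ i j, side i = side j → point i = point j → i = j := by decide
  let f (i : Fin 6) : {A : Finset (Fin n) // A.card = k} × Bool :=
    (⟨insert (x (point i)) (B (side i)), by rw [card_insert_of_notMem (hxB _ _), hBcard]⟩, side i)
  have hadj : ∀ i j, (cycleGraph 6).Adj i j → (bipartiteKneser n k).Adj (f i) (f j) := by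
    intro i j hij
    obtain ⟨hside, hpoint⟩ := hcyc i j hij
    refine ⟨hside, ?_⟩
    have hBij : Disjoint (B (side i)) (B (side j)) := by
      revert hside; cases side i <;> cases side j <;> simp [hB, hB.symm]
    simp only [f, disjoint_insert_left, disjoint_insert_right, mem_insert, not_or]
    exact ⟨⟨hx.ne hpoint.symm, hxB _ _⟩, hxB _ _, hBij⟩
  refine ⟨Hom.toCopy ⟨f, hadj _ _⟩ fun i j hij => ?_⟩
  have hside : side i = side j := congrArg Prod.snd hij
  have hsets : insert (x (point i)) (B (side i)) = insert (x (point j)) (B (side j)) :=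
    congrArg (fun v => v.1.1) hij
  have hmem : x (point i) ∈ insert (x (point j)) (B (side i)) := hside ▸ hsets ▸ mem_insert_self _ _
  have hpoint : point i = point j :=
    hx ((mem_insert.mp hmem).resolve_right (hxB _ _))
  exact hcrt i j hside hpoint

lemma cycleGraph_six_isContained_bipartiteKneser_of_le {n k : ℕ} (hk : 0 < k)
    (hn : 2 * k + 1 ≤ n) : cycleGraph 6 ⊑ bipartiteKneser n k := by
  let a : Fin n := ⟨0, by omega⟩
  let b : Fin n := ⟨k, by omega⟩
  let c : Fin n := ⟨2 * k, by omega⟩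
  refine cycleGraph_six_isContained_bipartiteKneser ![a, b, c] ?_
    (fun s => if s then Ioo b c else Ioo a b) ?_ ?_ ?_
  · intro i j
    fin_cases i <;> fin_cases j <;> simp [a, b, c, Fin.ext_iff] <;> omega
  · simp only [Bool.false_eq_true, if_false, if_true]
    exact disjoint_left.mpr fun i hi hi' => (mem_Ioo.mp hi).2.not_gt (mem_Ioo.mp hi').1
  · intro s
    cases s <;> simp [Fin.card_Ioo, a, b, c] <;> omega
  · intro i s
    fin_cases i <;> cases s <;> simp [a, b, c, Fin.lt_def, two_mul]

/-- For `n = 2k+1`, the girth of the bipartite Kneser graph `B(n,k)` equals 6: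
it contains a cycle of length 6 and no shorter cycle. -/
theorem bipartiteKneser_girth_eq_six (k : ℕ) (hk : 0 < k) :
    (∃ (v : {A : Finset (Fin (2 * k + 1)) // A.card = k} × Bool)
       (w : (bipartiteKneser (2 * k + 1) k).Walk v v), w.IsCycle ∧ w.length = 6) ∧
    (∀ (v : {A : Finset (Fin (2 * k + 1)) // A.card = k} × Bool)
       (w : (bipartiteKneser (2 * k + 1) k).Walk v v), w.IsCycle → 6 ≤ w.length) :=
  ⟨(cycleGraph_isContained_iff (by norm_num)).mp
      (cycleGraph_six_isContained_bipartiteKneser_of_le hk le_rfl),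
    fun _ _ hw => six_le_length_of_isCycle (bipartiteKneser.sideColoring_s5 _ k)
      (bipartiteKneser_commonNeighbors_subsingleton le_rfl) hw⟩
end

section
/- Let $n, k$ be positive integers with $n \geq 2k+1$. The bipartite Kneser graph $B(n,k)$ is a connected graph. -/
open Finset

section Exchange

variable {α : Type*} [DecidableEq α]

theorem Finset.exists_exchange {s t : Finset α} (hcard : #s = #t) (hne : s ≠ t) :
    ∃ u : Finset α, #u = #s ∧ #(s ∪ u) ≤ #s + 1 ∧ #(t \ u) < #(t \ s) := by
  obtain ⟨a, has, hat⟩ : ∃ a ∈ s, a ∉ t := by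
    simpa [← sdiff_nonempty, Finset.Nonempty] using
      fun hst : s ⊆ t => hne (eq_of_subset_of_card_le hst hcard.ge)
  obtain ⟨b, hbt, hbs⟩ : ∃ b ∈ t, b ∉ s := by
    simpa [← sdiff_nonempty, Finset.Nonempty] using
      fun hts : t ⊆ s => hne (eq_of_subset_of_card_le hts hcard.le).symm
  refine ⟨insert b (s.erase a), ?_, ?_, ?_⟩
  · rw [card_insert_of_notMem (fun h => hbs (mem_of_mem_erase h)), card_erase_add_one has]
  · calc #(s ∪ insert b (s.erase a)) ≤ #(insert b s) :=
          card_le_card fun x => by simp only [mem_union, mem_insert, mem_erase]; tauto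
      _ ≤ #s + 1 := card_insert_le b s
  · calc #(t \ insert b (s.erase a)) ≤ #((t \ s).erase b) :=
          card_le_card fun x => by
            simp only [mem_sdiff, mem_insert, mem_erase]
            rintro ⟨hxt, hx⟩
            exact ⟨fun hxb => hx (.inl hxb), hxt,
              fun hxs => hx (.inr ⟨ne_of_mem_of_not_mem hxt hat, hxs⟩)⟩
      _ < #(t \ s) := card_erase_lt_of_mem (mem_sdiff.2 ⟨hbt, hbs⟩)

theorem Equivalence.rel_of_card_union_le_succ {k : ℕ}
    {r : {s : Finset α // #s = k} → {s : Finset α // #s = k} → Prop} (hr : Equivalence r)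
    (hadj : ∀ s t, #(s.1 ∪ t.1) ≤ k + 1 → r s t) (s t : {s : Finset α // #s = k}) :
    r s t := by
  induction hm : #(t.1 \ s.1) using Nat.strong_induction_on generalizing s with
  | _ m ih =>
    by_cases hst : s = t
    · exact hst ▸ hr.refl s
    obtain ⟨u, hu, hsu, hlt⟩ :=
      exists_exchange (s.2.trans t.2.symm) (fun h => hst (Subtype.ext h))
    rw [s.2] at hu hsu
    exact hr.trans (hadj s ⟨u, hu⟩ hsu) (ih _ (hm ▸ hlt) ⟨u, hu⟩ rfl)

theorem Finset.exists_card_eq_disjoint_s7 [Fintype α] {k : ℕ} (s : Finset α)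
    (h : k + #s ≤ Fintype.card α) : ∃ t : Finset α, #t = k ∧ Disjoint t s := by
  obtain ⟨t, hts, ht⟩ := exists_subset_card_eq (s := sᶜ) (n := k) (by rw [card_compl]; omega)
  exact ⟨t, ht, subset_compl_iff_disjoint_right.1 hts⟩

end Exchange

namespace bipartiteKneser

variable {n k : ℕ}

theorem exists_adj (hn : 2 * k ≤ n) (X : {A : Finset (Fin n) // #A = k} × Bool) :
    ∃ C : {A : Finset (Fin n) // #A = k}, (bipartiteKneser n k).Adj X (C, !X.2) := by
  obtain ⟨C, hC, hdisj⟩ := exists_card_eq_disjoint_s7 (k := k) X.1.1 (by simp [X.1.2]; omega)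
  exact ⟨⟨C, hC⟩, by simp, hdisj.symm⟩

theorem reachable_of_card_union_le (hn : 2 * k + 1 ≤ n) (ε : Bool)
    {A B : {A : Finset (Fin n) // #A = k}} (h : #(A.1 ∪ B.1) ≤ k + 1) :
    (bipartiteKneser n k).Reachable (A, ε) (B, ε) := by
  obtain ⟨C, hC, hdisj⟩ := exists_card_eq_disjoint_s7 (k := k) (A.1 ∪ B.1) (by simp; omega)
  have hAC : (bipartiteKneser n k).Adj (A, ε) (⟨C, hC⟩, !ε) :=
    ⟨by simp, (hdisj.mono_right subset_union_left).symm⟩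
  have hCB : (bipartiteKneser n k).Adj (⟨C, hC⟩, !ε) (B, ε) :=
    ⟨by simp, hdisj.mono_right subset_union_right⟩
  exact hAC.reachable.trans hCB.reachable

theorem reachable_of_snd_eq (hn : 2 * k + 1 ≤ n) (ε : Bool)
    (A B : {A : Finset (Fin n) // #A = k}) :
    (bipartiteKneser n k).Reachable (A, ε) (B, ε) :=
  ((bipartiteKneser n k).reachable_is_equivalence.comap (·, ε)).rel_of_card_union_le_succ
    (fun _ _ => reachable_of_card_union_le hn ε) A B

end bipartiteKneser

theorem bipartiteKneser_connected_general (n k : ℕ) (hn : 2 * k + 1 ≤ n) :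
    (bipartiteKneser n k).Connected := by
  obtain ⟨A, hA, -⟩ := exists_card_eq_disjoint_s7 (k := k) (∅ : Finset (Fin n)) (by simp; omega)
  have : Nonempty ({A : Finset (Fin n) // #A = k} × Bool) := ⟨(⟨A, hA⟩, false)⟩
  refine .mk fun ⟨A, ε⟩ ⟨B, ε'⟩ => ?_
  by_cases hεε' : ε' = ε
  · exact hεε' ▸ bipartiteKneser.reachable_of_snd_eq hn ε A B
  obtain ⟨C, hAC⟩ := bipartiteKneser.exists_adj (by omega) (A, ε)
  rw [Bool.eq_not_iff.2 hεε']
  exact hAC.reachable.trans (bipartiteKneser.reachable_of_snd_eq hn _ C B)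

/-- For `n ≥ 2k+1`, the bipartite Kneser graph `B(n,k)` is connected. -/
theorem bipartiteKneser_connected (n k : ℕ) (hk : 0 < k) (hn : 2 * k + 1 ≤ n) :
    (bipartiteKneser n k).Connected :=
  bipartiteKneser_connected_general n k hn
end

section
/- Let $n, k, r$ be positive integers with $n \geq 2k+1$ and $r \geq 2$, and let $\Omega$ be a finite set with $|\Omega| = n + k(r-2)$. Let $F = \{(i_1, C_1), \ldots, (i_{r-2}, C_{r-2})\}$ be a flag of $\Gamma(KG(n,k),r)$ of rank $r-2$ (so the $C_m$ are pairwise disjoint $k$-subsets of $\Omega$ and the types $i_m$ are distinct), and let $i, j$ be the two types not occurring in $F$. Then the subgraph of the incidence graph of $\Gamma(KG(n,k),r)$ induced on the vertices $(i, A)$ and $(j, B)$ with $A$ and $B$ disjoint from every $C_m$ is isomorphic to the bipartite Kneser graph $B(n,k)$. (Every rank two residue of $\Gamma(KG(n,k),r)$ is isomorphic to the neighborhood geometry of $KG(n,k)$.) -/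
/-!
Let `S` be the union of the flag's sets `C m`. Since these are `r - 2` pairwise disjoint
`k`-sets, the complement `Sᶜ` has exactly `n` points, and an element of type `i` or `j`
lies in the residue iff its set avoids `S`, i.e. is a `k`-subset of `Sᶜ`. Identifying
`Sᶜ` with `Fin n` and the types `i, j` with the two sides of `B(n,k)` gives the isomorphism,
because incidence between the two types is exactly disjointness.
-/

/-- The incidence graph of the incidence system `Γ(KG(n,k),r)`. -/
def incidenceGraph (r k : ℕ) (Ω : Type*) :
    SimpleGraph (Fin r × {A : Finset Ω // A.card = k}) where
  Adj X Y := X.1 ≠ Y.1 ∧ Disjoint X.2.1 Y.2.1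
  symm := ⟨fun _ _ h => ⟨h.1.symm, h.2.symm⟩⟩
  loopless := ⟨fun _ h => h.1 rfl⟩

open Finset

section

variable {n k r : ℕ} {Ω : Type*}

theorem cond_injective {α : Type*} {a b : α} (hab : a ≠ b) :
    Function.Injective fun ε : Bool => cond ε b a := by
  intro ε δ h
  cases ε <;> cases δ <;> simp_all [eq_comm]

theorem exists_fin_embedding_map_univ_eq {s : Finset Ω} (hs : s.card = n) :
    ∃ e : Fin n ↪ Ω, univ.map e = s := by
  subst hs
  refine ⟨s.equivFin.symm.toEmbedding.trans (Function.Embedding.subtype _), ?_⟩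
  rw [← map_map, map_univ_equiv, univ_eq_attach, attach_map_val]

def kneserToIncidence (e : Fin n ↪ Ω) {i j : Fin r} (hij : i ≠ j) :
    bipartiteKneser n k ↪g incidenceGraph r k Ω where
  toFun X := (cond X.2 j i, ⟨X.1.1.map e, by rw [card_map, X.1.2]⟩)
  inj' := by
    rintro ⟨⟨A, hA⟩, ε⟩ ⟨⟨B, hB⟩, δ⟩ h
    simp only [Prod.mk.injEq, Subtype.mk.injEq, map_inj] at h
    obtain ⟨hεδ, rfl⟩ := h
    rw [cond_injective hij hεδ]
  map_rel_iff' {X Y} := by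
    change (cond X.2 j i ≠ cond Y.2 j i ∧ Disjoint (X.1.1.map e) (Y.1.1.map e)) ↔
      (X.2 ≠ Y.2 ∧ Disjoint X.1.1 Y.1.1)
    rw [(cond_injective hij).ne_iff, disjoint_map]

theorem kneserToIncidence_apply (e : Fin n ↪ Ω) {i j : Fin r} (hij : i ≠ j)
    (X : {A : Finset (Fin n) // A.card = k} × Bool) :
    kneserToIncidence e hij X = (cond X.2 j i, ⟨X.1.1.map e, by rw [card_map, X.1.2]⟩) :=
  rfl

theorem range_kneserToIncidence (e : Fin n ↪ Ω) {i j : Fin r} (hij : i ≠ j) :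
    Set.range (kneserToIncidence (k := k) e hij) =
      {v | (v.1 = i ∨ v.1 = j) ∧ v.2.1 ⊆ univ.map e} := by
  ext ⟨τ, A, hA⟩
  constructor
  · rintro ⟨⟨⟨B, hB⟩, ε⟩, h⟩
    simp only [kneserToIncidence_apply, Prod.mk.injEq, Subtype.mk.injEq] at h
    obtain ⟨rfl, rfl⟩ := h
    exact ⟨by cases ε <;> simp, map_subset_map.mpr (subset_univ B)⟩
  · rintro ⟨hτ, hAe⟩
    obtain ⟨B, -, rfl⟩ := subset_map_iff.mp hAe
    refine ⟨⟨⟨B, by rwa [card_map] at hA⟩, decide (τ = j)⟩, ?_⟩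
    rcases hτ with rfl | rfl <;> simp [kneserToIncidence_apply, hij]

theorem card_compl_biUnion [Fintype Ω] [DecidableEq Ω] {ι : Type*} [Fintype ι]
    {C : ι → Finset Ω} (hC : ∀ m, (C m).card = k)
    (hCd : ∀ m m', m ≠ m' → Disjoint (C m) (C m')) :
    (univ.biUnion C)ᶜ.card = Fintype.card Ω - Fintype.card ι * k := by
  rw [card_compl, card_biUnion fun m _ m' _ h => hCd m m' h]
  simp [hC]

end

theorem rank_two_residue_iso_general (n k r : ℕ) (Ω : Type*) [Fintype Ω] [DecidableEq Ω]
    (hΩ : Fintype.card Ω = n + k * (r - 2))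
    (C : Fin (r - 2) → Finset Ω) (hC : ∀ m, (C m).card = k)
    (hCd : ∀ m m', m ≠ m' → Disjoint (C m) (C m'))
    (i j : Fin r) (hij : i ≠ j) :
    Nonempty
      (((incidenceGraph r k Ω).induce
          {v : Fin r × {A : Finset Ω // A.card = k} |
            (v.1 = i ∨ v.1 = j) ∧ ∀ m, Disjoint v.2.1 (C m)}) ≃g
        bipartiteKneser n k) := by
  have hcard : (univ.biUnion C)ᶜ.card = n := by
    rw [card_compl_biUnion hC hCd, hΩ, Fintype.card_fin, mul_comm, Nat.add_sub_cancel]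
  obtain ⟨e, he⟩ := exists_fin_embedding_map_univ_eq hcard
  have hresidue : {v : Fin r × {A : Finset Ω // A.card = k} |
      (v.1 = i ∨ v.1 = j) ∧ ∀ m, Disjoint v.2.1 (C m)} =
      Set.range (kneserToIncidence e hij) := by
    simp_rw [range_kneserToIncidence, he, subset_compl_iff_disjoint_right,
      disjoint_biUnion_right, mem_univ, true_imp_iff]
  rw [hresidue]
  exact ⟨(kneserToIncidence e hij).isoInduceRange.symm⟩

/-- Every rank two residue of `Γ(KG(n,k),r)` is isomorphic to the neighborhood
geometry of `KG(n,k)`: given a flag `{(t m, C m)}` of rank `r-2` and the two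
remaining types `i, j`, the subgraph of the incidence graph induced on the
elements of type `i` or `j` that are disjoint from every `C m` is isomorphic to
the bipartite Kneser graph `B(n,k)`. -/
theorem rank_two_residue_iso (n k r : ℕ) (hk : 0 < k) (hn : 2 * k + 1 ≤ n)
    (hr : 2 ≤ r) (Ω : Type*) [Fintype Ω] [DecidableEq Ω]
    (hΩ : Fintype.card Ω = n + k * (r - 2))
    (t : Fin (r - 2) → Fin r) (ht : Function.Injective t)
    (C : Fin (r - 2) → Finset Ω) (hC : ∀ m, (C m).card = k)
    (hCd : ∀ m m', m ≠ m' → Disjoint (C m) (C m'))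
    (i j : Fin r) (hij : i ≠ j) (hi : i ∉ Set.range t) (hj : j ∉ Set.range t) :
    Nonempty
      (((incidenceGraph r k Ω).induce
          {v : Fin r × {A : Finset Ω // A.card = k} |
            (v.1 = i ∨ v.1 = j) ∧ ∀ m, Disjoint v.2.1 (C m)}) ≃g
        bipartiteKneser n k) :=
  rank_two_residue_iso_general n k r Ω hΩ C hC hCd i j hij
end

section
/- Let $n, k, r$ be positive integers with $n \geq 2k+1$ and $r \geq 2$, and let $\Omega$ be a finite set with $|\Omega| = n + k(r-2)$. Every automorphism $f$ of the incidence graph of $\Gamma(KG(n,k),r)$ that preserves types (i.e., $f(i,A)$ has first coordinate $i$ for every vertex $(i,A)$) is induced by a unique permutation $\sigma$ of $\Omega$, i.e., $f(i, A) = (i, \sigma(A))$ for all vertices $(i,A)$. Hence the group of type-preserving automorphisms is isomorphic to the symmetric group on $\Omega$. -/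
open Finset Function

namespace KneserIncidence

variable {Ω : Type*}

structure KSetEquiv (k : ℕ) (g h : Finset Ω → Finset Ω) : Prop where
  mapsTo : Set.MapsTo g {A | #A = k} {A | #A = k}
  mapsTo_symm : Set.MapsTo h {A | #A = k} {A | #A = k}
  invOn : Set.InvOn h g {A | #A = k} {A | #A = k}

lemma KSetEquiv.symm {k : ℕ} {g h : Finset Ω → Finset Ω} (e : KSetEquiv k g h) :
    KSetEquiv k h g :=
  ⟨e.mapsTo_symm, e.mapsTo, e.invOn.symm⟩

section

variable [DecidableEq Ω]

section CardUnion

variable {X Y Z T : Finset Ω} {m k : ℕ} {a b c : Ω}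

lemma card_insert_eq_succ (ha : a ∉ T) (hT : #T = k) : #(insert a T) = k + 1 := by
  rw [card_insert_of_notMem ha, hT]

lemma card_insert_union_insert (ha : a ∉ T) (hb : b ∉ T) (hab : a ≠ b) :
    #(insert a T ∪ insert b T) = #T + 2 := by
  rw [insert_union, union_insert, union_self, card_insert_of_notMem (by simp [hab, ha]),
    card_insert_of_notMem hb]

lemma card_insert_union_insert_union_insert (ha : a ∉ T) (hb : b ∉ T) (hc : c ∉ T)
    (hab : a ≠ b) (hac : a ≠ c) (hbc : b ≠ c) :
    #(insert a T ∪ insert b T ∪ insert c T) = #T + 3 := by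
  simp only [insert_union, union_insert, union_self]
  simp [card_insert_of_notMem, *, Ne.symm hab, Ne.symm hac, Ne.symm hbc]

lemma card_inter_lt_of_ne (hXY : #X = #Y) (hne : X ≠ Y) : #(X ∩ Y) < #X :=
  card_lt_card <| Finset.ssubset_iff_subset_ne.2 ⟨inter_subset_left, fun h =>
    hne (eq_of_subset_of_card_le (inter_eq_left.1 h) hXY.ge)⟩

lemma inter_subset_of_card_union_le (hX : #X = m + 1) (hY : #Y = m + 1) (hZ : #Z = m + 1)
    (hXY : X ≠ Y) (hXZ : #(X ∪ Z) ≤ m + 2) (hYZ : #(Y ∪ Z) ≤ m + 2) (hZXY : ¬Z ⊆ X ∪ Y) :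
    X ∩ Y ⊆ Z := by
  obtain ⟨z, hzZ, hzXY⟩ := not_subset.1 hZXY
  -- `z` is the only point of `Z` outside `X`, and also the only one outside `Y`
  have erase_subset_of {W : Finset Ω} (hW : #W = m + 1) (hWZ : #(W ∪ Z) ≤ m + 2) (hzW : z ∉ W) :
      Z.erase z ⊆ W := by
    intro w hw
    by_contra hwW
    have : #(Z \ W) ≤ 1 := by have := card_sdiff_add_card Z W; rw [union_comm] at this; omega
    exact (mem_erase.1 hw).1
      (card_le_one.1 this w (mem_sdiff.2 ⟨mem_of_mem_erase hw, hwW⟩) z (mem_sdiff.2 ⟨hzZ, hzW⟩))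
  have hsub : Z.erase z ⊆ X ∩ Y := subset_inter
    (erase_subset_of hX hXZ fun h => hzXY (mem_union_left _ h))
    (erase_subset_of hY hYZ fun h => hzXY (mem_union_right _ h))
  have heq : Z.erase z = X ∩ Y := eq_of_subset_of_card_le hsub <| by
    have := card_inter_lt_of_ne (hX.trans hY.symm) hXY
    rw [card_erase_of_mem hzZ]
    omega
  exact heq ▸ erase_subset z Z

end CardUnion

/-- For `k`-sets, `#(A ∪ B ∪ C) ≤ k + 1` says that `A`, `B`, `C` lie in a common `(k+1)`-set. -/
structure SmallUnionEquiv (k : ℕ) (g h : Finset Ω → Finset Ω) : Prop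
    extends KSetEquiv k g h where
  card_union_le_iff : ∀ A B C : Finset Ω, #A = k → #B = k → #C = k →
    (#(A ∪ B ∪ C) ≤ k + 1 ↔ #(g A ∪ g B ∪ g C) ≤ k + 1)

section SmallUnionEquiv

variable {k : ℕ} {g h : Finset Ω → Finset Ω} {A B T : Finset Ω} {a b c : Ω}

lemma SmallUnionEquiv.symm (e : SmallUnionEquiv k g h) : SmallUnionEquiv k h g where
  toKSetEquiv := e.toKSetEquiv.symm
  card_union_le_iff A B C hA hB hC := by
    have := e.card_union_le_iff (h A) (h B) (h C) (e.mapsTo_symm hA) (e.mapsTo_symm hB)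
      (e.mapsTo_symm hC)
    rw [e.invOn.2 hA, e.invOn.2 hB, e.invOn.2 hC] at this
    exact this.symm

lemma SmallUnionEquiv.card_union_le_iff_pair (e : SmallUnionEquiv k g h) (hA : #A = k)
    (hB : #B = k) : #(A ∪ B) ≤ k + 1 ↔ #(g A ∪ g B) ≤ k + 1 := by
  simpa only [union_assoc, union_self] using e.card_union_le_iff A B B hA hB hB

namespace SmallUnionEquiv

variable (e : SmallUnionEquiv (k + 1) g h) (hT : #T = k)
include e hT

lemma card_apply_insert (ha : a ∉ T) : #(g (insert a T)) = k + 1 :=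
  e.mapsTo (card_insert_eq_succ ha hT)

lemma apply_insert_ne (ha : a ∉ T) (hb : b ∉ T) (hab : a ≠ b) :
    g (insert a T) ≠ g (insert b T) := fun heq =>
  hab <| (insert_inj ha).1 <|
    e.invOn.1.injOn (card_insert_eq_succ ha hT) (card_insert_eq_succ hb hT) heq

lemma card_apply_insert_union_le (ha : a ∉ T) (hb : b ∉ T) (hab : a ≠ b) :
    #(g (insert a T) ∪ g (insert b T)) ≤ k + 2 :=
  (e.card_union_le_iff_pair (card_insert_eq_succ ha hT) (card_insert_eq_succ hb hT)).1
    (by rw [card_insert_union_insert ha hb hab, hT])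

lemma inter_subset_apply_insert (ha : a ∉ T) (hb : b ∉ T) (hc : c ∉ T) (hab : a ≠ b) :
    g (insert a T) ∩ g (insert b T) ⊆ g (insert c T) := by
  rcases eq_or_ne a c with rfl | hac
  · exact inter_subset_left
  rcases eq_or_ne b c with rfl | hbc
  · exact inter_subset_right
  refine inter_subset_of_card_union_le (e.card_apply_insert hT ha) (e.card_apply_insert hT hb)
    (e.card_apply_insert hT hc) (e.apply_insert_ne hT ha hb hab)
    (e.card_apply_insert_union_le hT ha hc hac) (e.card_apply_insert_union_le hT hb hc hbc)
    fun hsub => ?_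
  -- otherwise the three images lie in a `(k+2)`-set, but their preimages span `k + 3` points
  have := (e.card_union_le_iff _ _ _ (card_insert_eq_succ ha hT) (card_insert_eq_succ hb hT)
    (card_insert_eq_succ hc hT)).2
    (by rw [union_eq_left.2 hsub]; exact e.card_apply_insert_union_le hT ha hb hab)
  rw [card_insert_union_insert_union_insert ha hb hc hab hac hbc, hT] at this
  omega

end SmallUnionEquiv

variable [Fintype Ω]

def derived (g : Finset Ω → Finset Ω) (T : Finset Ω) : Finset Ω :=
  Tᶜ.inf fun a => g (insert a T)

lemma derived_subset (hTA : T ⊆ A) (hA : #A = #T + 1) : derived g T ⊆ g A := by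
  obtain ⟨c, hc, rfl⟩ := exists_eq_insert_iff.2 ⟨hTA, hA.symm⟩
  exact Finset.inf_le (mem_compl.2 hc)

lemma exists_ne_notMem_of_card_add_two_le (hT : #T + 2 ≤ Fintype.card Ω) :
    ∃ a b, a ∉ T ∧ b ∉ T ∧ a ≠ b := by
  obtain ⟨a, ha, b, hb, hab⟩ := one_lt_card.1 (by rw [card_compl]; omega : 1 < #Tᶜ)
  exact ⟨a, b, mem_compl.1 ha, mem_compl.1 hb, hab⟩

lemma card_derived_union_le (hg : Set.MapsTo g {A | #A = k + 1} {A | #A = k + 1})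
    (hN : k + 1 ≤ Fintype.card Ω) {T₁ T₂ T₃ : Finset Ω} (h₁ : #T₁ = k) (h₂ : #T₂ = k)
    (h₃ : #T₃ = k) (hU : #(T₁ ∪ T₂ ∪ T₃) ≤ k + 1) :
    #(derived g T₁ ∪ derived g T₂ ∪ derived g T₃) ≤ k + 1 := by
  obtain ⟨A, hUA, -, hA⟩ := exists_subsuperset_card_eq (subset_univ (T₁ ∪ T₂ ∪ T₃)) hU
    (by rwa [card_univ])
  obtain ⟨⟨h₁A, h₂A⟩, h₃A⟩ := union_subset_iff.1 hUA |>.imp_left union_subset_iff.1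
  have hsub {T : Finset Ω} (hT : #T = k) (hTA : T ⊆ A) : derived g T ⊆ g A :=
    derived_subset hTA (by rw [hA, hT])
  calc #(derived g T₁ ∪ derived g T₂ ∪ derived g T₃) ≤ #(g A) := card_le_card <|
        union_subset (union_subset (hsub h₁ h₁A) (hsub h₂ h₂A)) (hsub h₃ h₃A)
    _ = k + 1 := hg hA

namespace SmallUnionEquiv

variable (e : SmallUnionEquiv (k + 1) g h) (hT : #T = k)
include e hT

lemma derived_eq (ha : a ∉ T) (hb : b ∉ T) (hab : a ≠ b) :
    derived g T = g (insert a T) ∩ g (insert b T) :=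
  Subset.antisymm (subset_inter (Finset.inf_le (mem_compl.2 ha)) (Finset.inf_le (mem_compl.2 hb)))
    (Finset.le_inf fun _ hc => e.inter_subset_apply_insert hT ha hb (mem_compl.1 hc) hab)

variable (hN : k + 2 ≤ Fintype.card Ω)
include hN

lemma card_derived : #(derived g T) = k := by
  obtain ⟨a, b, ha, hb, hab⟩ := exists_ne_notMem_of_card_add_two_le (by omega : #T + 2 ≤ _)
  rw [e.derived_eq hT ha hb hab]
  have := card_union_add_card_inter (g (insert a T)) (g (insert b T))
  have := card_inter_lt_of_ne ((e.card_apply_insert hT ha).trans (e.card_apply_insert hT hb).symm)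
    (e.apply_insert_ne hT ha hb hab)
  have := e.card_apply_insert_union_le hT ha hb hab
  have := e.card_apply_insert hT ha
  have := e.card_apply_insert hT hb
  omega

lemma derived_derived : derived h (derived g T) = T := by
  obtain ⟨a, b, ha, hb, hab⟩ := exists_ne_notMem_of_card_add_two_le (by omega : #T + 2 ≤ _)
  have hS := e.card_derived hT hN
  have hsub {c : Ω} (hc : c ∉ T) : derived h (derived g T) ⊆ insert c T := by
    rw [← e.invOn.1 (card_insert_eq_succ hc hT)]
    exact derived_subset (Finset.inf_le (mem_compl.2 hc)) (by rw [e.card_apply_insert hT hc, hS])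
  refine eq_of_subset_of_card_le ?_ (by rw [e.symm.card_derived hS hN, hT])
  calc derived h (derived g T) ⊆ insert a T ∩ insert b T := subset_inter (hsub ha) (hsub hb)
    _ = T := by rw [insert_inter_of_notMem (by simp [hab, ha]), inter_eq_left.2 (subset_insert _ _)]

end SmallUnionEquiv

lemma SmallUnionEquiv.derived (e : SmallUnionEquiv (k + 1) g h) (hN : k + 2 ≤ Fintype.card Ω) :
    SmallUnionEquiv k (derived g) (derived h) where
  mapsTo _ hT := e.card_derived hT hN
  mapsTo_symm _ hT := e.symm.card_derived hT hN
  invOn := ⟨fun _ hT => e.derived_derived hT hN, fun _ hT => e.symm.derived_derived hT hN⟩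
  card_union_le_iff T₁ T₂ T₃ h₁ h₂ h₃ := by
    refine ⟨card_derived_union_le e.mapsTo (by omega) h₁ h₂ h₃, fun hU => ?_⟩
    have := card_derived_union_le e.mapsTo_symm (by omega) (e.card_derived h₁ hN)
      (e.card_derived h₂ hN) (e.card_derived h₃ hN) hU
    rwa [e.derived_derived h₁ hN, e.derived_derived h₂ hN, e.derived_derived h₃ hN] at this

lemma KSetEquiv.exists_perm_of_one (e : KSetEquiv 1 g h) :
    ∃ σ : Equiv.Perm Ω, ∀ A, #A = 1 → g A = A.image σ := by
  choose τ hτ using fun x : Ω => card_eq_one.1 (e.mapsTo (card_singleton x))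
  have hinj : Injective τ := fun x y hxy => singleton_injective <|
    e.invOn.1.injOn (card_singleton x) (card_singleton y) (by rw [hτ, hτ, hxy])
  refine ⟨Equiv.ofBijective τ hinj.bijective_of_finite, fun A hA => ?_⟩
  obtain ⟨x, rfl⟩ := card_eq_one.1 hA
  rw [hτ, image_singleton, Equiv.ofBijective_apply]

theorem SmallUnionEquiv.exists_perm (e : SmallUnionEquiv k g h) (hk : 0 < k)
    (hkN : k < Fintype.card Ω) : ∃ σ : Equiv.Perm Ω, ∀ A, #A = k → g A = A.image σ := by
  induction k, hk using Nat.le_induction generalizing g h with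
  | base => exact e.exists_perm_of_one
  | succ m hm ih =>
    obtain ⟨σ, hσ⟩ := ih (e.derived (by omega)) (by omega)
    refine ⟨σ, fun A hA => (eq_of_subset_of_card_le (fun y hy => ?_) ?_).symm⟩
    · obtain ⟨x, hx, rfl⟩ := mem_image.1 hy
      obtain ⟨z, hz, hzx⟩ := exists_mem_ne (by omega : 1 < #A) x
      have hT : #(A.erase z) = m := by rw [card_erase_of_mem hz, hA]; rfl
      refine derived_subset (erase_subset z A) (by rw [hT, hA]) ?_
      rw [hσ _ hT]
      exact mem_image_of_mem σ (mem_erase.2 ⟨hzx.symm, hx⟩)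
    · rw [card_image_of_injective _ σ.injective, hA, e.mapsTo hA]

end SmallUnionEquiv

lemma le_succ_iff_of_choose_sub_eq {N k u v : ℕ} (hk : 0 < k) (hN : 2 * k + 1 ≤ N)
    (h : (N - u).choose k = (N - v).choose k) : u ≤ k + 1 ↔ v ≤ k + 1 := by
  have hlt : (N - (k + 2)).choose k < (N - (k + 1)).choose k := by
    obtain ⟨j, rfl⟩ : ∃ j, k = j + 1 := ⟨k - 1, by omega⟩
    rw [show N - (j + 1 + 1) = N - (j + 1 + 2) + 1 by omega, Nat.choose_succ_succ']
    have := Nat.choose_pos (show j ≤ N - (j + 1 + 2) by omega)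
    omega
  have anti {x y : ℕ} (hxy : x ≤ y) : (N - y).choose k ≤ (N - x).choose k :=
    Nat.choose_le_choose k (by omega)
  constructor <;> intro h₁ <;> by_contra h₂
  · have := anti h₁; have := anti (show k + 2 ≤ v by omega); omega
  · have := anti h₁; have := anti (show k + 2 ≤ u by omega); omega

variable [Fintype Ω] {k : ℕ}

section Counting

variable {g g' h h' : Finset Ω → Finset Ω} {A B C : Finset Ω}

lemma card_powersetCard_compl_union_eq (e' : KSetEquiv k g' h')
    (hcross : ∀ A B, #A = k → #B = k → (Disjoint A B ↔ Disjoint (g A) (g' B)))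
    (hA : #A = k) (hB : #B = k) (hC : #C = k) :
    #(powersetCard k (A ∪ B ∪ C)ᶜ) = #(powersetCard k (g A ∪ g B ∪ g C)ᶜ) := by
  have hmem {U D : Finset Ω} : D ∈ powersetCard k Uᶜ ↔ #D = k ∧ Disjoint U D := by
    rw [mem_powersetCard, subset_compl_iff_disjoint_left, and_comm]
  have hdisj {D : Finset Ω} (hD : #D = k) :
      Disjoint (A ∪ B ∪ C) D ↔ Disjoint (g A ∪ g B ∪ g C) (g' D) := by
    simp only [disjoint_union_left, hcross _ _ hA hD, hcross _ _ hB hD, hcross _ _ hC hD]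
  refine card_bij' (fun D _ => g' D) (fun D _ => h' D) (fun D hD => ?_) (fun D hD => ?_)
    (fun D hD => e'.invOn.1 (hmem.1 hD).1) (fun D hD => e'.invOn.2 (hmem.1 hD).1)
  · obtain ⟨hD, hUD⟩ := hmem.1 hD
    exact hmem.2 ⟨e'.mapsTo hD, (hdisj hD).1 hUD⟩
  · obtain ⟨hD, hUD⟩ := hmem.1 hD
    refine hmem.2 ⟨e'.mapsTo_symm hD, (hdisj (e'.mapsTo_symm hD)).2 ?_⟩
    rwa [e'.invOn.2 hD]

lemma SmallUnionEquiv.of_disjoint_iff (hk : 0 < k) (hN : 2 * k + 1 ≤ Fintype.card Ω)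
    (e : KSetEquiv k g h) (e' : KSetEquiv k g' h')
    (hcross : ∀ A B, #A = k → #B = k → (Disjoint A B ↔ Disjoint (g A) (g' B))) :
    SmallUnionEquiv k g h where
  toKSetEquiv := e
  card_union_le_iff A B C hA hB hC := by
    have := card_powersetCard_compl_union_eq e' hcross hA hB hC
    rw [card_powersetCard, card_powersetCard, card_compl, card_compl] at this
    exact le_succ_iff_of_choose_sub_eq hk hN this

end Counting

section Uniqueness

variable {X Y : Finset Ω}

lemma subset_of_forall_disjoint (hY : #Y + k ≤ Fintype.card Ω) (hX : #X ≤ k)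
    (h : ∀ D, #D = k → Disjoint D Y → Disjoint D X) : X ⊆ Y := by
  intro x hx
  by_contra hxY
  obtain ⟨D, hxD, hDY, hD⟩ := exists_subsuperset_card_eq (n := k)
    (singleton_subset_iff.2 (mem_compl.2 hxY))
    (by rw [card_singleton]; exact (card_pos.2 ⟨x, hx⟩).trans_le hX) (by rw [card_compl]; omega)
  exact disjoint_left.1 (h D hD (subset_compl_iff_disjoint_right.1 hDY))
    (hxD (mem_singleton_self x)) hx

lemma eq_of_forall_disjoint_iff (hX : #X = k) (hY : #Y = k) (hN : 2 * k ≤ Fintype.card Ω)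
    (h : ∀ D, #D = k → (Disjoint D X ↔ Disjoint D Y)) : X = Y :=
  Subset.antisymm (subset_of_forall_disjoint (by omega) hX.le fun D hD => (h D hD).2)
    (subset_of_forall_disjoint (by omega) hY.le fun D hD => (h D hD).1)

lemma image_eq_of_disjoint_iff {g : Finset Ω → Finset Ω} (σ : Equiv.Perm Ω)
    (hN : 2 * k ≤ Fintype.card Ω) (hg : Set.MapsTo g {A | #A = k} {A | #A = k})
    (hcross : ∀ A B, #A = k → #B = k → (Disjoint A B ↔ Disjoint (A.image σ) (g B)))
    {B : Finset Ω} (hB : #B = k) : g B = B.image σ := by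
  refine eq_of_forall_disjoint_iff (hg hB) (by rw [card_image_of_injective _ σ.injective, hB]) hN
    fun D hD => ?_
  have := hcross (D.image σ.symm) B (by rw [card_image_of_injective _ σ.symm.injective, hD]) hB
  rw [image_image, σ.self_comp_symm, image_id] at this
  rw [← this, ← disjoint_image σ.injective, image_image, σ.self_comp_symm, image_id]

lemma perm_eq_of_forall_image_eq {σ τ : Equiv.Perm Ω} (hk : 0 < k) (hkN : k < Fintype.card Ω)
    (h : ∀ A, #A = k → A.image σ = A.image τ) : σ = τ := by
  ext x
  by_contra hne
  have hy : τ.symm (σ x) ≠ x := fun hy => hne (τ.symm_apply_eq.1 hy)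
  obtain ⟨A, hxA, hAy, hA⟩ := exists_subsuperset_card_eq (s := {x}) (n := k)
    (t := univ.erase (τ.symm (σ x))) (by simpa using hy.symm) (by rw [card_singleton]; exact hk)
    (by rw [card_erase_of_mem (mem_univ _), card_univ]; omega)
  obtain ⟨a, ha, hax⟩ := mem_image.1 (h A hA ▸ mem_image_of_mem σ (hxA (mem_singleton_self x)))
  rw [← hax, Equiv.symm_apply_apply] at hAy
  exact (mem_erase.1 (hAy ha)).1 rfl

end Uniqueness

end

section IncidenceGraph

variable {r k : ℕ} (f : incidenceGraph r k Ω ≃g incidenceGraph r k Ω)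

def typeMap (i : Fin r) (A : Finset Ω) : Finset Ω :=
  if hA : #A = k then (f (i, ⟨A, hA⟩)).2 else A

variable {f} {i j : Fin r} {A B : Finset Ω}

lemma typeMap_of_card (hA : #A = k) : typeMap f i A = (f (i, ⟨A, hA⟩)).2 := dif_pos hA

lemma card_typeMap (hA : #A = k) : #(typeMap f i A) = k := by
  rw [typeMap_of_card hA]
  exact (f _).2.2

variable (hf : ∀ v, (f v).1 = v.1)
include hf

lemma apply_eq_typeMap (hA : #A = k) : f (i, ⟨A, hA⟩) = (i, ⟨typeMap f i A, card_typeMap hA⟩) :=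
  Prod.ext (hf _) (Subtype.ext (typeMap_of_card hA).symm)

lemma disjoint_typeMap_iff (hij : i ≠ j) (hA : #A = k) (hB : #B = k) :
    Disjoint (typeMap f i A) (typeMap f j B) ↔ Disjoint A B := by
  have := f.map_adj_iff (v := (i, ⟨A, hA⟩)) (w := (j, ⟨B, hB⟩))
  rw [apply_eq_typeMap hf hA, apply_eq_typeMap hf hB] at this
  simpa [incidenceGraph, hij] using this

lemma kSetEquiv_typeMap (i : Fin r) : KSetEquiv k (typeMap f i) (typeMap f.symm i) := by
  have hf' (v : _) : (f.symm v).1 = v.1 := by simpa using (hf (f.symm v)).symm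
  refine ⟨fun _ => card_typeMap, fun _ => card_typeMap, fun A (hA : #A = k) => ?_,
    fun A (hA : #A = k) => ?_⟩
  · rw [typeMap_of_card (card_typeMap hA), ← apply_eq_typeMap hf hA, RelIso.symm_apply_apply]
  · rw [typeMap_of_card (card_typeMap hA), ← apply_eq_typeMap hf' hA, RelIso.apply_symm_apply]

end IncidenceGraph

end KneserIncidence

open KneserIncidence in
/-- Every type-preserving automorphism of the incidence graph of
`Γ(KG(n,k),r)` is induced by a unique permutation `σ` of `Ω`, i.e.
`f (i, A) = (i, σ(A))` for all vertices `(i, A)`. Hence the group of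
type-preserving automorphisms of `Γ(KG(n,k),r)` is isomorphic to the symmetric
group on `Ω`. -/
theorem typePreserving_aut_from_perm (n k r : ℕ) (hk : 0 < k)
    (hn : 2 * k + 1 ≤ n) (hr : 2 ≤ r) (Ω : Type*) [Fintype Ω] [DecidableEq Ω]
    (hΩ : Fintype.card Ω = n + k * (r - 2))
    (f : incidenceGraph r k Ω ≃g incidenceGraph r k Ω)
    (hf : ∀ v, (f v).1 = v.1) :
    ∃! σ : Equiv.Perm Ω, ∀ v, ((f v).2 : Finset Ω) = (v.2 : Finset Ω).image σ := by
  have hN : 2 * k + 1 ≤ Fintype.card Ω := hΩ ▸ hn.trans (Nat.le_add_right _ _)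
  let i₀ : Fin r := ⟨0, by omega⟩
  let i₁ : Fin r := ⟨1, by omega⟩
  have hi₀₁ : i₀ ≠ i₁ := by simp [i₀, i₁, Fin.ext_iff]
  have e : SmallUnionEquiv k (typeMap f i₀) (typeMap f.symm i₀) :=
    .of_disjoint_iff hk hN (kSetEquiv_typeMap hf i₀) (kSetEquiv_typeMap hf i₁)
      fun A B hA hB => (disjoint_typeMap_iff hf hi₀₁ hA hB).symm
  obtain ⟨σ, hσ⟩ := e.exists_perm hk (by omega)
  have htypeMap (i : Fin r) (A : Finset Ω) (hA : #A = k) : typeMap f i A = A.image σ := by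
    rcases eq_or_ne i₀ i with rfl | hi
    · exact hσ A hA
    · refine image_eq_of_disjoint_iff σ (by omega) (fun _ => card_typeMap) (fun A B hA hB => ?_) hA
      rw [← hσ A hA, disjoint_typeMap_iff hf hi hA hB]
  refine ⟨σ, fun ⟨i, A, hA⟩ => ?_, fun τ hτ => ?_⟩
  · rw [← typeMap_of_card hA, htypeMap i A hA]
  · refine perm_eq_of_forall_image_eq hk (by omega) fun A hA => ?_
    rw [← hτ (i₀, ⟨A, hA⟩), ← typeMap_of_card hA, hσ A hA]
end

section
/- Let $n, k, r$ be positive integers with $n \geq 2k+1$ and $r \geq 2$, and let $\Omega$ be a finite set with $|\Omega| = n + k(r-2)$. Every automorphism $f$ of the incidence graph of $\Gamma(KG(n,k),r)$ is of the form $f(i, A) = (\pi(i), \sigma(A))$ for a unique permutation $\pi$ of $\{1, \ldots, r\}$ and a unique permutation $\sigma$ of $\Omega$; conversely every such pair $(\pi, \sigma)$ induces an automorphism. Hence the full automorphism group of the incidence graph is isomorphic to $S_\Omega \times S_r$. -/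
open Finset Function
open scoped FinsetFamily

lemma Nat.le_of_choose_le_choose {a b k : ℕ} (hk : 0 < k) (ha : k ≤ a)
    (h : a.choose k ≤ b.choose k) : a ≤ b := by
  by_contra! hba
  obtain ⟨k, rfl⟩ := Nat.exists_eq_add_one_of_ne_zero hk.ne'
  rcases lt_or_ge b (k + 1) with hb | hb
  · rw [Nat.choose_eq_zero_of_lt hb] at h
    exact (Nat.choose_pos ha).ne' (Nat.le_zero.1 h)
  · have hsucc : b.choose (k + 1) < (b + 1).choose (k + 1) := by
      rw [Nat.choose_succ_succ']
      have := Nat.choose_pos (by omega : k ≤ b)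
      omega
    have := Nat.choose_le_choose (k + 1) (show b + 1 ≤ a by omega)
    omega

namespace Finset

variable {α : Type*} [DecidableEq α]

lemma lt_card_union_of_ne {A B : Finset α} (h : #A = #B) (hne : A ≠ B) : #A < #(A ∪ B) :=
  card_lt_card ⟨subset_union_left, fun hBA =>
    hne (eq_of_subset_of_card_le (union_subset_iff.1 hBA).2 h.le).symm⟩

lemma apply_eq_of_forall_card_union_le {β : Type*} {k : ℕ} (g : {A : Finset α // #A = k} → β)
    (hg : ∀ A B, #(A.1 ∪ B.1) ≤ k + 1 → g A = g B) (A B : {A : Finset α // #A = k}) :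
    g A = g B := by
  induction hn : #(A.1 \ B.1) using Nat.strong_induction_on generalizing A with
  | _ n ih =>
  obtain ⟨A, hA⟩ := A
  by_cases hAB : A ⊆ B.1
  · exact congrArg g (Subtype.ext (eq_of_subset_of_card_le hAB (B.2.trans hA.symm).le))
  obtain ⟨a, haA, haB⟩ := not_subset.1 hAB
  obtain ⟨b, hbB, hbA⟩ := not_subset.1 fun hBA : B.1 ⊆ A =>
    hAB (eq_of_subset_of_card_le hBA (hA.trans B.2.symm).le).symm.subset
  have hA' : #(insert b (A.erase a)) = k := by
    rw [card_insert_of_notMem fun h => hbA (mem_of_mem_erase h), card_erase_add_one haA, hA]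
  calc g ⟨A, hA⟩ = g ⟨_, hA'⟩ := by
        refine hg _ _ ((card_le_card (?_ : _ ⊆ insert b A)).trans ?_)
        · exact union_subset (subset_insert _ _) (insert_subset_insert _ (erase_subset _ _))
        · exact hA ▸ card_insert_le _ _
    _ = g B := by
        refine ih _ ?_ _ rfl
        rw [← hn, insert_sdiff_of_mem _ hbB, erase_sdiff_comm]
        exact card_erase_lt_of_mem (mem_sdiff.2 ⟨haA, haB⟩)

lemma inter_subset_or_subset_union {j : ℕ} {A B D : Finset α} (hA : #A = j + 1)
    (hB : #B = j + 1) (hD : #D = j + 1) (hAB : #(A ∪ B) = j + 2) (hAD : #(A ∪ D) = j + 2)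
    (hBD : #(B ∪ D) = j + 2) : A ∩ B ⊆ D ∨ D ⊆ A ∪ B := by
  by_cases hS : A ∩ B ⊆ D
  · exact .inl hS
  right
  have hDAB := card_union_add_card_inter (D ∩ A) (D ∩ B)
  rw [← inter_union_distrib_left, ← inter_inter_distrib_left, inter_comm D A,
    inter_comm D B] at hDAB
  have hlt : #(D ∩ (A ∩ B)) < #(A ∩ B) :=
    card_lt_card ⟨inter_subset_right, fun h => hS (h.trans inter_subset_left)⟩
  have := card_union_add_card_inter A B
  have := card_union_add_card_inter A D
  have := card_union_add_card_inter B D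
  exact (eq_of_subset_of_card_le (inter_subset_left : D ∩ (A ∪ B) ⊆ D) (by omega)) ▸
    inter_subset_right

lemma card_inter_lt_of_subset_of_not_subset {S T D E : Finset α} (hST : S ⊆ T) (hDT : D ⊆ T)
    (hSD : ¬S ⊆ D) (hSE : S ⊆ E) (hET : ¬E ⊆ T) (hE : #E ≤ #S + 1) : #(D ∩ E) < #S := by
  have hlt : #(E ∩ T) < #E :=
    card_lt_card ⟨inter_subset_left, fun h => hET (h.trans inter_subset_right)⟩
  have hET : E ∩ T = S := (eq_of_subset_of_card_le (subset_inter hSE hST) (by omega)).symm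
  calc #(D ∩ E) ≤ #(D ∩ S) := card_le_card fun x hx => by
        rw [mem_inter] at hx ⊢
        exact ⟨hx.1, hET ▸ mem_inter.2 ⟨hx.2, hDT hx.1⟩⟩
    _ < #S := card_lt_card ⟨inter_subset_right, fun h => hSD (h.trans inter_subset_left)⟩

variable [Fintype α]

lemma exists_card_eq_mem_disjoint {k : ℕ} (hk : 0 < k) {x : α} {S : Finset α} (hx : x ∉ S)
    (h : #S + k ≤ Fintype.card α) : ∃ C : Finset α, #C = k ∧ x ∈ C ∧ Disjoint C S := by
  obtain ⟨C, hCsub, hC⟩ := exists_subset_card_eq (s := (insert x S)ᶜ) (n := k - 1)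
    (by rw [card_compl, card_insert_of_notMem hx]; omega)
  have hxC : x ∉ C := fun h => by simpa using hCsub h
  refine ⟨insert x C, by rw [card_insert_of_notMem hxC]; omega, mem_insert_self _ _, ?_⟩
  rw [disjoint_insert_left]
  exact ⟨hx, (subset_compl_iff_disjoint_right.1 hCsub).mono_right (subset_insert _ _)⟩

lemma eq_of_forall_disjoint_iff {k : ℕ} (hk : 0 < k) (hm : 2 * k ≤ Fintype.card α)
    {A B : Finset α} (hA : #A = k) (hB : #B = k)
    (h : ∀ C, #C = k → (Disjoint C A ↔ Disjoint C B)) : A = B := by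
  by_contra hne
  obtain ⟨x, hxA, hxB⟩ := not_subset.1 fun hAB => hne (eq_of_subset_of_card_le hAB (by omega))
  obtain ⟨C, hC, hxC, hCB⟩ := exists_card_eq_mem_disjoint hk hxB (by omega)
  exact disjoint_left.1 ((h C hC).2 hCB) hxC hxA

lemma exists_pairwise_disjoint_card_eq {ι : Type*} [Fintype ι] (k : ℕ) (X : Finset α)
    (h : Fintype.card ι * k + #X ≤ Fintype.card α) :
    ∃ c : ι → Finset α, (∀ t, #(c t) = k ∧ Disjoint (c t) X) ∧ Pairwise (Disjoint on c) := by
  obtain ⟨e⟩ : Nonempty (ι × Fin k ↪ {x // x ∈ Xᶜ}) :=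
    Embedding.nonempty_of_card_le (by
      simp only [Fintype.card_prod, Fintype.card_fin, mem_compl, Fintype.card_subtype_compl,
        Fintype.card_coe]
      omega)
  have he : ∀ t, Injective fun s => (e (t, s) : α) := fun t s s' h =>
    (Prod.ext_iff.1 (e.injective (Subtype.ext h))).2
  refine ⟨fun t => univ.map ⟨_, he t⟩, fun t => ⟨by simp, ?_⟩, fun t t' htt' => ?_⟩
  · simpa [disjoint_left] using fun s => mem_compl.1 (e (t, s)).2
  · simp only [onFun, disjoint_left, mem_map, mem_univ, true_and, Embedding.coeFn_mk]
    rintro _ ⟨s, rfl⟩ ⟨s', hs'⟩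
    exact htt' (Prod.ext_iff.1 (e.injective (Subtype.ext hs'))).1.symm

lemma mem_upShadow_singleton {S A : Finset α} : A ∈ ∂⁺ {S} ↔ S ⊆ A ∧ #A = #S + 1 := by
  simp [mem_upShadow_iff_exists_mem_card_add_one]

lemma card_upShadow_singleton (S : Finset α) : #(∂⁺ {S}) = Fintype.card α - #S := by
  have : ∂⁺ {S} = Sᶜ.image (insert · S) := by
    ext A
    simp [mem_upShadow_iff]
  rw [this, card_image_of_injOn fun a ha b _ h => (insert_inj (mem_compl.1 ha)).1 h, card_compl]

lemma card_union_of_mem_upShadow_singleton {S A B : Finset α} (hA : A ∈ ∂⁺ {S})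
    (hB : B ∈ ∂⁺ {S}) (hAB : A ≠ B) : #(A ∪ B) = #S + 2 := by
  simp only [mem_upShadow_iff, Finset.mem_singleton, exists_eq_left] at hA hB
  obtain ⟨a, ha, rfl⟩ := hA
  obtain ⟨b, hb, rfl⟩ := hB
  have hab : a ≠ b := fun h => hAB (h ▸ rfl)
  rw [insert_union, union_insert, union_self, card_insert_of_notMem (by simp [hab, ha]),
    card_insert_of_notMem hb]

lemma subset_of_upShadow_singleton_eq {S T : Finset α} (hS : #S + 2 ≤ Fintype.card α)
    (h : ∂⁺ {S} = ∂⁺ {T}) : T ⊆ S := by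
  intro x hxT
  by_contra hxS
  obtain ⟨y, hy⟩ : (insert x S)ᶜ.Nonempty := by
    rw [← card_pos, card_compl, card_insert_of_notMem hxS]
    omega
  have hyS : y ∉ S := fun h => mem_compl.1 hy (mem_insert_of_mem h)
  have hmem : insert y S ∈ ∂⁺ {T} :=
    h ▸ mem_upShadow_singleton.2 ⟨subset_insert _ _, card_insert_of_notMem hyS⟩
  rcases mem_insert.1 ((mem_upShadow_singleton.1 hmem).1 hxT) with hxy | hxS'
  · exact mem_compl.1 hy (hxy ▸ mem_insert_self x S)
  · exact hxS hxS'

/-- Pairwise adjacent `(j + 1)`-sets all contain one `j`-set or all lie in one `(j + 2)`-set,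
and only `j + 2` sets fit the second case. -/
lemma exists_subset_upShadow_singleton {j : ℕ} {F : Finset (Finset α)}
    (hsize : ∀ A ∈ F, #A = j + 1)
    (hpair : (F : Set (Finset α)).Pairwise fun A B => #(A ∪ B) = j + 2) (hF : j + 3 ≤ #F) :
    ∃ S, #S = j ∧ F ⊆ ∂⁺ {S} := by
  obtain ⟨A, hAF, B, hBF, hAB⟩ := one_lt_card.1 (by omega : 1 < #F)
  have hunion := hpair hAF hBF hAB
  have hinter : #(A ∩ B) = j := by
    have := card_union_add_card_inter A B
    rw [hunion, hsize A hAF, hsize B hBF] at this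
    omega
  have htri : ∀ D ∈ F, A ∩ B ⊆ D ∨ D ⊆ A ∪ B := by
    intro D hDF
    by_cases hDA : D = A
    · exact .inl (hDA ▸ inter_subset_left)
    by_cases hDB : D = B
    · exact .inl (hDB ▸ inter_subset_right)
    exact inter_subset_or_subset_union (hsize A hAF) (hsize B hBF) (hsize D hDF) hunion
      (hpair hAF hDF (Ne.symm hDA)) (hpair hBF hDF (Ne.symm hDB))
  by_cases hstar : ∀ D ∈ F, A ∩ B ⊆ D
  · refine ⟨A ∩ B, hinter, fun D hDF => mem_upShadow_singleton.2 ⟨hstar D hDF, ?_⟩⟩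
    rw [hsize D hDF, hinter]
  push Not at hstar
  obtain ⟨D, hDF, hSD⟩ := hstar
  have hDT := (htri D hDF).resolve_left hSD
  have hsub : F ⊆ powersetCard (j + 1) (A ∪ B) := by
    intro E hEF
    refine mem_powersetCard.2 ⟨?_, hsize E hEF⟩
    by_contra hET
    have hSE := (htri E hEF).resolve_right hET
    have hDE : D ≠ E := fun h => hSD (h ▸ hSE)
    have hlt := card_inter_lt_of_subset_of_not_subset (inter_subset_union) hDT hSD hSE hET
      (by rw [hsize E hEF, hinter])
    have := card_union_add_card_inter D E
    rw [hpair hDF hEF hDE, hsize D hDF, hsize E hEF] at this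
    omega
  have := card_le_card hsub
  rw [card_powersetCard, hunion, Nat.choose_succ_self_right] at this
  omega

end Finset

lemma Equiv.Perm.eq_of_forall_image_eq {α : Type*} [Fintype α] [DecidableEq α] {k : ℕ}
    (hk : 0 < k) (hm : k < Fintype.card α) {σ τ : Equiv.Perm α}
    (h : ∀ A : Finset α, #A = k → A.image σ = A.image τ) : σ = τ := by
  ext x
  by_contra hne
  have hx : x ∉ ({τ.symm (σ x)} : Finset α) := by
    rw [Finset.mem_singleton, eq_comm, Equiv.symm_apply_eq]
    exact hne
  obtain ⟨C, hC, hxC, hCy⟩ := exists_card_eq_mem_disjoint hk hx (by rw [card_singleton]; omega)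
  obtain ⟨z, hzC, hz⟩ := mem_image.1 (h C hC ▸ Finset.mem_image_of_mem σ hxC)
  exact disjoint_left.1 hCy hzC (by simp [← hz])

section Johnson

variable {α : Type*} [Fintype α] [DecidableEq α]

/-- An injective homomorphism of the Johnson graph on the `k`-sets, in which `A` and `B` are
adjacent when `#(A ∪ B) = k + 1`. -/
structure IsJohnsonEmbedding (k : ℕ) (ψ : Finset α → Finset α) : Prop where
  mapsTo : Set.MapsTo ψ {A | #A = k} {A | #A = k}
  injOn : Set.InjOn ψ {A | #A = k}
  adj : ∀ ⦃A B⦄, #A = k → #B = k → #(A ∪ B) = k + 1 → #(ψ A ∪ ψ B) = k + 1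

namespace IsJohnsonEmbedding

variable {ψ : Finset α → Finset α}

lemma exists_perm_of_one (hψ : IsJohnsonEmbedding 1 ψ) :
    ∃ σ : Equiv.Perm α, ∀ A, #A = 1 → ψ A = A.image σ := by
  choose g hg using fun x : α => card_eq_one.1 (hψ.mapsTo (card_singleton x))
  have hg_inj : Injective g := fun x y h => singleton_injective <|
    hψ.injOn (card_singleton x) (card_singleton y) (by rw [hg, hg, h])
  refine ⟨Equiv.ofBijective g (Finite.injective_iff_bijective.1 hg_inj), fun A hA => ?_⟩
  obtain ⟨x, rfl⟩ := card_eq_one.1 hA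
  simp [hg]

lemma exists_image_upShadow_singleton_eq {j : ℕ} (hm : 2 * j + 3 ≤ Fintype.card α)
    (hψ : IsJohnsonEmbedding (j + 1) ψ) {S : Finset α} (hS : #S = j) :
    ∃ S', #S' = j ∧ (∂⁺ {S}).image ψ = ∂⁺ {S'} := by
  have hsize : ∀ A ∈ ∂⁺ {S}, #A = j + 1 := fun A hA => by
    rw [(mem_upShadow_singleton.1 hA).2, hS]
  have hinj : Set.InjOn ψ (∂⁺ {S} : Set (Finset α)) := hψ.injOn.mono fun A hA => hsize A hA
  have hcard : #((∂⁺ {S}).image ψ) = Fintype.card α - j := by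
    rw [card_image_of_injOn hinj, card_upShadow_singleton, hS]
  obtain ⟨S', hS', hsub⟩ := exists_subset_upShadow_singleton (F := (∂⁺ {S}).image ψ)
    (fun A hA => by
      obtain ⟨B, hB, rfl⟩ := mem_image.1 hA
      exact hψ.mapsTo (hsize B hB))
    (by
      rintro _ hA' _ hB' hne
      obtain ⟨A, hA, rfl⟩ := mem_image.1 hA'
      obtain ⟨B, hB, rfl⟩ := mem_image.1 hB'
      refine hψ.adj (hsize A hA) (hsize B hB) ?_
      rw [card_union_of_mem_upShadow_singleton hA hB fun h => hne (congrArg ψ h), hS])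
    (by omega)
  refine ⟨S', hS', eq_of_subset_of_card_le hsub ?_⟩
  rw [card_upShadow_singleton, hS', hcard]

/-- The map on `j`-sets sending `S` to the centre of the star that `ψ` maps the star of `S`
onto. -/
lemma exists_of_succ {j : ℕ} (hm : 2 * j + 3 ≤ Fintype.card α)
    (hψ : IsJohnsonEmbedding (j + 1) ψ) :
    ∃ ψ' : Finset α → Finset α, IsJohnsonEmbedding j ψ' ∧
      ∀ ⦃S A⦄, #S = j → #A = j + 1 → S ⊆ A → ψ' S ⊆ ψ A := by
  choose! ψ' hψ'card hψ' using
    fun S (hS : #S = j) => hψ.exists_image_upShadow_singleton_eq hm hS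
  have hsub : ∀ ⦃S A⦄, #S = j → #A = j + 1 → S ⊆ A → ψ' S ⊆ ψ A := fun S A hS hA hSA =>
    (mem_upShadow_singleton.1 (hψ' S hS ▸ mem_image_of_mem ψ
      (mem_upShadow_singleton.2 ⟨hSA, by rw [hA, hS]⟩))).1
  have hinj : Set.InjOn ψ' {S | #S = j} := fun S (hS : #S = j) T (hT : #T = j) h => by
    have hsize : ∀ U, #U = j →
        ((∂⁺ {U} : Finset (Finset α)) : Set (Finset α)) ⊆ {A | #A = j + 1} :=
      fun U hU A hA => show #A = j + 1 by rw [(mem_upShadow_singleton.1 hA).2, hU]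
    have himage : ψ '' ((∂⁺ {S} : Finset (Finset α)) : Set (Finset α)) =
        ψ '' ((∂⁺ {T} : Finset (Finset α)) : Set (Finset α)) := by
      rw [← coe_image, ← coe_image, hψ' S hS, hψ' T hT, h]
    have hstar := coe_inj.1 ((hψ.injOn.image_eq_image_iff (hsize S hS) (hsize T hT)).1 himage)
    exact (subset_of_upShadow_singleton_eq (by omega) hstar.symm).antisymm
      (subset_of_upShadow_singleton_eq (by omega) hstar)
  refine ⟨ψ', ⟨fun S hS => hψ'card S hS, hinj, fun S T hS hT hU => ?_⟩, hsub⟩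
  have hne : ψ' S ≠ ψ' T := fun h => by
    have := hinj hS hT h
    subst this
    rw [union_self] at hU
    omega
  have hle := card_le_card (union_subset (hsub hS hU subset_union_left)
    (hsub hT hU subset_union_right))
  have hlt := lt_card_union_of_ne ((hψ'card S hS).trans (hψ'card T hT).symm) hne
  rw [hψ.mapsTo hU] at hle
  rw [hψ'card S hS] at hlt
  omega

theorem exists_perm {k : ℕ} (hk : 0 < k) (hm : 2 * k + 1 ≤ Fintype.card α)
    (hψ : IsJohnsonEmbedding k ψ) : ∃ σ : Equiv.Perm α, ∀ A, #A = k → ψ A = A.image σ := by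
  induction k, hk using Nat.le_induction generalizing ψ with
  | base => exact hψ.exists_perm_of_one
  | succ j hj ih =>
    obtain ⟨ψ', hψ', hsub⟩ := hψ.exists_of_succ (by omega)
    obtain ⟨σ, hσ⟩ := ih (by omega) hψ'
    refine ⟨σ, fun A hA => (eq_of_subset_of_card_le ?_ ?_).symm⟩
    · intro z hz
      obtain ⟨x, hxA, rfl⟩ := mem_image.1 hz
      obtain ⟨y, hyA, hyx⟩ := exists_mem_ne (by omega : 1 < #A) x
      have hy : #(A.erase y) = j := by rw [card_erase_of_mem hyA, hA]; rfl
      have := hsub hy hA (erase_subset y A)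
      rw [hσ _ hy] at this
      exact this (mem_image_of_mem σ (mem_erase.2 ⟨hyx.symm, hxA⟩))
    · rw [hψ.mapsTo hA, card_image_of_injective _ σ.injective, hA]

end IsJohnsonEmbedding

end Johnson

section Kneser

variable {α : Type*} [Fintype α] [DecidableEq α] {k : ℕ} {φ ψ : Finset α → Finset α}

lemma injOn_of_disjoint_iff (hk : 0 < k) (hm : 2 * k ≤ Fintype.card α)
    (h : ∀ A B, #A = k → #B = k → (Disjoint A B ↔ Disjoint (φ A) (ψ B))) :
    Set.InjOn ψ {A | #A = k} := fun B hB B' hB' hBB' =>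
  eq_of_forall_disjoint_iff hk hm hB hB' fun A hA => by rw [h A B hA hB, h A B' hA hB', hBB']

/-- Two `k`-sets are adjacent in the Johnson graph exactly when the fewest `k`-sets are disjoint
from both; `φ` injects the `k`-sets disjoint from `B` and `B'` into those disjoint from
`ψ B` and `ψ B'`. -/
lemma isJohnsonEmbedding_of_disjoint_iff (hk : 0 < k) (hm : 2 * k + 1 ≤ Fintype.card α)
    (hφ : Set.MapsTo φ {A | #A = k} {A | #A = k}) (hψ : Set.MapsTo ψ {A | #A = k} {A | #A = k})
    (h : ∀ A B, #A = k → #B = k → (Disjoint A B ↔ Disjoint (φ A) (ψ B))) :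
    IsJohnsonEmbedding k ψ := by
  have hψinj := injOn_of_disjoint_iff hk (by omega) h
  have hφinj := injOn_of_disjoint_iff (ψ := φ) hk (by omega) fun A B hA hB => by
    rw [disjoint_comm, h B A hB hA, disjoint_comm]
  refine ⟨hψ, hψinj, fun B B' hB hB' hBB' => ?_⟩
  have hne : ψ B ≠ ψ B' := fun he => by
    rw [hψinj hB hB' he, union_self] at hBB'
    omega
  have hlt := lt_card_union_of_ne ((hψ hB).trans (hψ hB').symm) hne
  have hcount : #(powersetCard k (B ∪ B')ᶜ) ≤ #(powersetCard k (ψ B ∪ ψ B')ᶜ) := by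
    refine card_le_card_of_injOn φ (fun A hA => ?_) (hφinj.mono fun A hA => ?_)
    · rw [mem_coe, mem_powersetCard, subset_compl_iff_disjoint_right, disjoint_union_right]
        at hA ⊢
      exact ⟨⟨(h A B hA.2 hB).1 hA.1.1, (h A B' hA.2 hB').1 hA.1.2⟩, hφ hA.2⟩
    · exact (mem_powersetCard.1 hA).2
  rw [card_powersetCard, card_powersetCard, card_compl, card_compl, hBB'] at hcount
  have := Nat.le_of_choose_le_choose hk (by omega) hcount
  have := card_le_univ (ψ B ∪ ψ B')
  rw [hψ hB] at hlt
  omega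

/-- For `φ = ψ` this says that the automorphisms of the Kneser graph `KG(n, k)`, `n ≥ 2k + 1`,
come from permutations of the ground set. -/
theorem exists_perm_of_disjoint_iff (hk : 0 < k) (hm : 2 * k + 1 ≤ Fintype.card α)
    (hφ : Set.MapsTo φ {A | #A = k} {A | #A = k}) (hψ : Set.MapsTo ψ {A | #A = k} {A | #A = k})
    (h : ∀ A B, #A = k → #B = k → (Disjoint A B ↔ Disjoint (φ A) (ψ B))) :
    ∃ σ : Equiv.Perm α, ∀ A, #A = k → φ A = A.image σ ∧ ψ A = A.image σ := by
  obtain ⟨σ, hσ⟩ := (isJohnsonEmbedding_of_disjoint_iff hk hm hφ hψ h).exists_perm hk hm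
  refine ⟨σ, fun A hA => ⟨eq_of_forall_disjoint_iff hk (by omega) (hφ hA)
    (by rw [card_image_of_injective _ σ.injective, hA]) fun C hC => ?_, hσ A hA⟩⟩
  have hC' : #(C.image σ.symm) = k := by rw [card_image_of_injective _ σ.symm.injective, hC]
  have hCσ : C = (C.image σ.symm).image σ := by
    rw [image_image]
    simp
  rw [disjoint_comm, disjoint_comm (a := C), hCσ, disjoint_image σ.injective, ← hσ _ hC']
  exact (h A _ hA hC').symm

end Kneser

namespace incidenceGraph

variable {r k : ℕ} {Ω : Type*}

local notation "𝒢" => incidenceGraph r k Ω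
local notation "𝒱" => Fin r × {A : Finset Ω // #A = k}

lemma adj_iff {X Y : 𝒱} : (𝒢).Adj X Y ↔ X.1 ≠ Y.1 ∧ Disjoint X.2.1 Y.2.1 := Iff.rfl

/-- The `r - 1` vertices of the clique `c` use all types but one, and a common neighbour of `c`
must have the remaining type. -/
lemma fst_eq_of_forall_adj {ι : Type*} [Fintype ι] (hι : Fintype.card ι + 1 = r) {c : ι → 𝒱}
    (hc : Pairwise fun t t' => (𝒢).Adj (c t) (c t')) {u v : 𝒱} (hu : ∀ t, (𝒢).Adj u (c t))
    (hv : ∀ t, (𝒢).Adj v (c t)) : u.1 = v.1 := by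
  have hinj : Injective fun t => (c t).1 := fun t t' h => by_contra fun hne => (hc hne).1 h
  have hcard : #(univ.image fun t => (c t).1)ᶜ = 1 := by
    rw [card_compl, card_image_of_injective _ hinj, card_univ, Fintype.card_fin]
    omega
  refine card_le_one.1 hcard.le _ ?_ _ ?_ <;>
    simp only [mem_compl, mem_image, mem_univ, true_and, not_exists]
  exacts [fun t h => (hu t).1 h.symm, fun t h => (hv t).1 h.symm]

/-- The value `∅` on sets of the wrong size is junk. -/
def setMap (f : 𝒢 ≃g 𝒢) (i : Fin r) (A : Finset Ω) : Finset Ω :=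
  if h : #A = k then (f (i, ⟨A, h⟩)).2 else ∅

lemma setMap_of_card (f : 𝒢 ≃g 𝒢) (i : Fin r) {A : Finset Ω} (h : #A = k) :
    setMap f i A = (f (i, ⟨A, h⟩)).2 := dif_pos h

lemma mapsTo_setMap (f : 𝒢 ≃g 𝒢) (i : Fin r) :
    Set.MapsTo (setMap f i) {A | #A = k} {A | #A = k} := fun A hA => by
  rw [Set.mem_ofPred_eq, setMap_of_card f i hA]
  exact (f _).2.2

lemma disjoint_iff_disjoint_setMap {f : 𝒢 ≃g 𝒢} {π : Equiv.Perm (Fin r)}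
    (hπ : ∀ v, (f v).1 = π v.1) {i j : Fin r} (hij : i ≠ j) {A B : Finset Ω} (hA : #A = k)
    (hB : #B = k) : Disjoint A B ↔ Disjoint (setMap f i A) (setMap f j B) := by
  have := f.map_adj_iff (v := (i, ⟨A, hA⟩)) (w := (j, ⟨B, hB⟩))
  rw [adj_iff, adj_iff, hπ, hπ] at this
  rw [setMap_of_card f i hA, setMap_of_card f j hB]
  simpa [hij] using this.symm

def ofPerm (π : Equiv.Perm (Fin r)) (σ : Equiv.Perm Ω) : 𝒢 ≃g 𝒢 where
  toEquiv := π.prodCongr (σ.finsetCongr.subtypeEquiv fun A => by simp)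
  map_rel_iff' {X Y} := by
    simp [adj_iff, Equiv.finsetCongr_apply, disjoint_map]

variable [DecidableEq Ω]

lemma ofPerm_apply (π : Equiv.Perm (Fin r)) (σ : Equiv.Perm Ω) (v : 𝒱) :
    (ofPerm π σ v).1 = π v.1 ∧ ((ofPerm π σ v).2 : Finset Ω) = (v.2 : Finset Ω).image σ :=
  ⟨rfl, map_eq_image _ _⟩

variable [Fintype Ω]

/-- `(i, A)` and `(i, B)` have `r - 1` pairwise adjacent common neighbours, hence so do their
images. -/
lemma fst_apply_eq_of_card_union_le (hm : r * k < Fintype.card Ω) (f : 𝒢 ≃g 𝒢) (i : Fin r)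
    {A B : {A : Finset Ω // #A = k}} (hAB : #(A.1 ∪ B.1) ≤ k + 1) :
    (f (i, A)).1 = (f (i, B)).1 := by
  have hι : Fintype.card {j // j ≠ i} + 1 = r := by
    have := i.pos
    simp only [ne_eq, Fintype.card_subtype_compl, Fintype.card_fin, Fintype.card_unique]
    omega
  obtain ⟨c, hc, hdisj⟩ := exists_pairwise_disjoint_card_eq (ι := {j // j ≠ i}) k (A.1 ∪ B.1)
    (by rw [← hι] at hm; nlinarith)
  let w : {j // j ≠ i} → 𝒱 := fun t => (t.1, ⟨c t, (hc t).1⟩)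
  have hw : Pairwise fun t t' => (𝒢).Adj (w t) (w t') :=
    fun t t' htt' => ⟨fun h => htt' (Subtype.ext h), hdisj htt'⟩
  have hadj : ∀ C : {A : Finset Ω // #A = k}, C.1 ⊆ A.1 ∪ B.1 → ∀ t, (𝒢).Adj (i, C) (w t) :=
    fun C hC t => ⟨Ne.symm t.2, ((hc t).2.mono_right hC).symm⟩
  exact fst_eq_of_forall_adj hι (c := f ∘ w) (fun t t' htt' => f.map_adj_iff.2 (hw htt'))
    (fun t => f.map_adj_iff.2 (hadj A subset_union_left t))
    (fun t => f.map_adj_iff.2 (hadj B subset_union_right t))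

lemma exists_perm_fst_apply (hm : r * k < Fintype.card Ω) (f : 𝒢 ≃g 𝒢) :
    ∃ π : Equiv.Perm (Fin r), ∀ v, (f v).1 = π v.1 := by
  have hK : Fin r → Nonempty {A : Finset Ω // #A = k} := fun i => by
    obtain ⟨A, -, hA⟩ := exists_subset_card_eq (s := (univ : Finset Ω)) (n := k)
      (by rw [card_univ]; nlinarith [i.pos])
    exact ⟨⟨A, hA⟩⟩
  let τ : Fin r → Fin r := fun i => (f (i, (hK i).some)).1
  have hτ : ∀ v, (f v).1 = τ v.1 := fun v =>
    apply_eq_of_forall_card_union_le (fun A => (f (v.1, A)).1)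
      (fun _ _ => fst_apply_eq_of_card_union_le hm f v.1) _ _
  have hsurj : Surjective τ := fun j => ⟨(f.symm (j, (hK j).some)).1, by rw [← hτ]; simp⟩
  exact ⟨Equiv.ofBijective τ (Finite.surjective_iff_bijective.1 hsurj), hτ⟩

theorem exists_perm_prod_apply (hk : 0 < k) (hr : 2 ≤ r) (hm : r * k < Fintype.card Ω)
    (f : 𝒢 ≃g 𝒢) : ∃ p : Equiv.Perm (Fin r) × Equiv.Perm Ω,
      ∀ v, (f v).1 = p.1 v.1 ∧ ((f v).2 : Finset Ω) = (v.2 : Finset Ω).image p.2 := by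
  obtain ⟨π, hπ⟩ := exists_perm_fst_apply hm f
  have hpair : ∀ i j : Fin r, i ≠ j → ∃ σ : Equiv.Perm Ω,
      ∀ A, #A = k → setMap f i A = A.image σ ∧ setMap f j A = A.image σ := fun i j hij =>
    exists_perm_of_disjoint_iff hk (by nlinarith) (mapsTo_setMap f i) (mapsTo_setMap f j)
      fun A B hA hB => disjoint_iff_disjoint_setMap hπ hij hA hB
  let i₀ : Fin r := ⟨0, by omega⟩
  obtain ⟨σ, hσ⟩ := hpair i₀ ⟨1, hr⟩ (by simp [i₀, Fin.ext_iff])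
  have hσ_all : ∀ i A, #A = k → setMap f i A = A.image σ := fun i A hA => by
    by_cases hi : i = i₀
    · exact hi ▸ (hσ A hA).1
    obtain ⟨σ', hσ'⟩ := hpair i i₀ hi
    rw [(hσ' A hA).1, ← (hσ' A hA).2, (hσ A hA).1]
  exact ⟨(π, σ), fun v => ⟨hπ v, by rw [← hσ_all v.1 _ v.2.2, setMap_of_card]⟩⟩

lemma prod_perm_ext (hk : 0 < k) (hr : 0 < r) (hm : k < Fintype.card Ω)
    {p q : Equiv.Perm (Fin r) × Equiv.Perm Ω}
    (h : ∀ v : 𝒱, p.1 v.1 = q.1 v.1 ∧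
      (v.2 : Finset Ω).image p.2 = (v.2 : Finset Ω).image q.2) :
    p = q := by
  obtain ⟨A₀, -, hA₀⟩ := exists_subset_card_eq (s := (univ : Finset Ω)) (n := k)
    (by rw [card_univ]; omega)
  exact Prod.ext (Equiv.ext fun i => (h (i, ⟨A₀, hA₀⟩)).1)
    (Equiv.Perm.eq_of_forall_image_eq hk hm fun A hA => (h (⟨0, hr⟩, ⟨A, hA⟩)).2)

end incidenceGraph

/-- Every automorphism of the incidence graph of `Γ(KG(n,k),r)` is of the form
`(i, A) ↦ (π(i), σ(A))` for a unique pair of permutations `π` of the types and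
`σ` of `Ω`, and conversely every such pair induces an automorphism. Hence the
full automorphism group of `Γ(KG(n,k),r)` is isomorphic to `S_Ω × S_r`. -/
theorem aut_incidenceGraph (n k r : ℕ) (hk : 0 < k)
    (hn : 2 * k + 1 ≤ n) (hr : 2 ≤ r) (Ω : Type*) [Fintype Ω] [DecidableEq Ω]
    (hΩ : Fintype.card Ω = n + k * (r - 2)) :
    (∀ f : incidenceGraph r k Ω ≃g incidenceGraph r k Ω,
      ∃! p : Equiv.Perm (Fin r) × Equiv.Perm Ω,
        ∀ v, (f v).1 = p.1 v.1 ∧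
          ((f v).2 : Finset Ω) = (v.2 : Finset Ω).image p.2) ∧
    (∀ p : Equiv.Perm (Fin r) × Equiv.Perm Ω,
      ∃ f : incidenceGraph r k Ω ≃g incidenceGraph r k Ω,
        ∀ v, (f v).1 = p.1 v.1 ∧
          ((f v).2 : Finset Ω) = (v.2 : Finset Ω).image p.2) := by
  have hm : r * k < Fintype.card Ω := by
    obtain ⟨r, rfl⟩ := Nat.exists_eq_add_of_le hr
    rw [hΩ, Nat.add_sub_cancel_left]
    nlinarith
  refine ⟨fun f => ?_, fun p => ⟨incidenceGraph.ofPerm p.1 p.2, incidenceGraph.ofPerm_apply _ _⟩⟩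
  obtain ⟨p, hp⟩ := incidenceGraph.exists_perm_prod_apply hk hr hm f
  refine ⟨p, hp, fun q hq => incidenceGraph.prod_perm_ext hk (by omega) (by nlinarith)
    fun v => ⟨(hq v).1.symm.trans (hp v).1, (hq v).2.symm.trans (hp v).2⟩⟩
end
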